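/- arXiv:2011.11990 — 3 statements merged into one kernel-verified Lean document; each statement's English description precedes it below -/
import Mathlib

section
/- Divergence identity for the weighted multiplier. Let m ≥ 0, γ > 0, and let φ be a smooth function on an open subset of ℝ^{1+2}; set f := ∂_t²φ − ∂_1²φ − ∂_2²φ + m²φ. Then at every point with 0 < r < t the following pointwise identity holds: (1/2) ∂_t [ (t − r)^{−γ} ( (∂_t φ)² + Σ_{a=1,2} (∂_a φ)² + m² φ² ) ] − Σ_{a=1,2} ∂_a [ (t − r)^{−γ} ∂_t φ ∂_a φ ] + (γ/2) (t − r)^{−γ−1} [ Σ_{a=1,2} ( (x^a/r) ∂_t φ + ∂_a φ )² + m² φ² ] = (t − r)^{−γ} f ∂_t φ. -/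
/-! Write `w = (t − r)^{−γ}` and `e = (∂_tφ)² + Σ_a (∂_aφ)² + m²φ²`. By the product rule the
left side is `w` times the unweighted divergence `½ ∂_t e − Σ_a ∂_a(∂_tφ ∂_aφ)`, which equals
`f ∂_tφ` because mixed second partials commute, plus the terms in which the derivative falls on
`w`. Since `∂_t w = −γ (t − r)^{−γ−1}` and `∂_a w = γ (t − r)^{−γ−1} x^a/r`, those terms and the
last summand on the left add up to `(γ/2) (t − r)^{−γ−1} (∂_tφ)² (Σ_a (x^a/r)² − 1) = 0`. -/

noncomputable section

open MeasureTheory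

/-- A point of `ℝ^{1+2}`; coordinate `0` is the time `t`, coordinates `1, 2` are spatial. -/
abbrev Pt : Type := Fin 3 → ℝ

/-- The spatial radius `r = |x| = √((x¹)² + (x²)²)`. -/
def rad (p : Pt) : ℝ := Real.sqrt ((p 1)^2 + (p 2)^2)

/-- The coordinate partial derivative `∂_i` (with `∂_0 = ∂_t`). -/
def pd (i : Fin 3) (φ : Pt → ℝ) (p : Pt) : ℝ := fderiv ℝ φ p (Pi.single i 1)

/-- `−□φ = ∂_t²φ − ∂_1²φ − ∂_2²φ`. -/
def negBox (φ : Pt → ℝ) (p : Pt) : ℝ :=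
  pd 0 (pd 0 φ) p - pd 1 (pd 1 φ) p - pd 2 (pd 2 φ) p

/-- The Lorentz boost `L_a = x^a ∂_t + t ∂_a`, for `a ∈ {1,2}` (indexed by `Fin 2`,
with `a : Fin 2` corresponding to the spatial coordinate `a.succ`). -/
def boost (a : Fin 2) (φ : Pt → ℝ) (p : Pt) : ℝ :=
  p a.succ * pd 0 φ p + p 0 * pd a.succ φ p

/-- The semi-hyperboloidal derivative `∂̲_a = (x^a/t) ∂_t + ∂_a`, `a ∈ {1,2}` (indexed by `Fin 2`). -/
def ubd (a : Fin 2) (φ : Pt → ℝ) (p : Pt) : ℝ :=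
  (p a.succ / p 0) * pd 0 φ p + pd a.succ φ p

/-- `∂̲_β` for `β ∈ {0,1,2}`, with `∂̲_0 = ∂_t`. -/
def ubar (β : Fin 3) (φ : Pt → ℝ) (p : Pt) : ℝ :=
  if β = 0 then pd 0 φ p else (p β / p 0) * pd 0 φ p + pd β φ p

/-- Iterated coordinate derivatives `∂^I`. -/
def pdSeq : List (Fin 3) → (Pt → ℝ) → Pt → ℝ
  | [], φ => φ
  | i :: I, φ => pd i (pdSeq I φ)

/-- Iterated boosts `L^J`. -/
def boostSeq : List (Fin 2) → (Pt → ℝ) → Pt → ℝ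
  | [], φ => φ
  | a :: J, φ => boost a (boostSeq J φ)

/-- The interior of the light cone, `K = {(t,x) : r < t − 1}`. -/
def coneK : Set Pt := {p | rad p < p 0 - 1}

/-- The slab `K_{[s0,s1]} = {(t,x) ∈ K : s0² ≤ t² − r² ≤ s1²}`. -/
def slab (s0 s1 : ℝ) : Set Pt :=
  {p | rad p < p 0 - 1 ∧ s0^2 ≤ (p 0)^2 - (rad p)^2 ∧ (p 0)^2 - (rad p)^2 ≤ s1^2}

/-- The parametrization `x ↦ (√(s² + |x|²), x)` of the hyperboloid `H_s`. -/
def hyp (s : ℝ) (x : Fin 2 → ℝ) : Pt :=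
  ![Real.sqrt (s^2 + (x 0)^2 + (x 1)^2), x 0, x 1]

/-- The flat `L²` norm on the hyperboloid `H_s`. -/
def L2f (s : ℝ) (g : Pt → ℝ) : ℝ :=
  Real.sqrt (∫ x : Fin 2 → ℝ, (g (hyp s x))^2)

/-- `φ` vanishes near the conical boundary `∂K_{[s0,s1]}` (i.e. on a neighbourhood of
`r = t − 1` within the slab, in particular outside the cone on the slab). -/
def VanishNearBdry (s0 s1 : ℝ) (φ : Pt → ℝ) : Prop :=
  ∃ ε > (0:ℝ), ∀ p : Pt, 0 < p 0 → s0^2 ≤ (p 0)^2 - (rad p)^2 →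
    (p 0)^2 - (rad p)^2 ≤ s1^2 → p 0 - 1 - ε < rad p → φ p = 0

/-- The hyperboloidal energy functional `E_m(s, φ)`. -/
def energyE (m s : ℝ) (φ : Pt → ℝ) : ℝ :=
  ∫ x : Fin 2 → ℝ,
    ((pd 0 φ (hyp s x))^2 + (pd 1 φ (hyp s x))^2 + (pd 2 φ (hyp s x))^2
      + 2 * (hyp s x 1 / hyp s x 0) * pd 0 φ (hyp s x) * pd 1 φ (hyp s x)
      + 2 * (hyp s x 2 / hyp s x 0) * pd 0 φ (hyp s x) * pd 2 φ (hyp s x)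
      + m^2 * (φ (hyp s x))^2)

/-- The weighted inverted time translation `Kφ = (t + r²/t) ∂_t φ + 2 x^a ∂_a φ`. -/
def Kvf (φ : Pt → ℝ) (p : Pt) : ℝ :=
  (p 0 + (rad p)^2 / p 0) * pd 0 φ p + 2 * (p 1 * pd 1 φ p + p 2 * pd 2 φ p)

/-- The conformal energy `E_con(s, φ)`. -/
def Econ (s : ℝ) (φ : Pt → ℝ) : ℝ :=
  ∫ x : Fin 2 → ℝ,
    ((s * ubd 0 φ (hyp s x))^2 + (s * ubd 1 φ (hyp s x))^2
      + (Kvf φ (hyp s x) + φ (hyp s x))^2)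

section PartialDerivCalculus

variable {f g : Pt → ℝ} {p : Pt}

lemma pd_const (c : ℝ) (i : Fin 3) : pd i (fun _ => c) p = 0 := by
  simp [pd]

lemma pd_apply (i j : Fin 3) : pd i (fun q => q j) p = if i = j then 1 else 0 := by
  rw [pd, (hasFDerivAt_apply j p).fderiv]
  simp [Pi.single_apply, eq_comm]

lemma pd_add (hf : DifferentiableAt ℝ f p) (hg : DifferentiableAt ℝ g p) (i : Fin 3) :
    pd i (fun q => f q + g q) p = pd i f p + pd i g p := by
  simp [pd, fderiv_fun_add hf hg]

lemma pd_sub (hf : DifferentiableAt ℝ f p) (hg : DifferentiableAt ℝ g p) (i : Fin 3) :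
    pd i (fun q => f q - g q) p = pd i f p - pd i g p := by
  simp [pd, fderiv_fun_sub hf hg]

lemma pd_mul (hf : DifferentiableAt ℝ f p) (hg : DifferentiableAt ℝ g p) (i : Fin 3) :
    pd i (fun q => f q * g q) p = pd i f p * g p + f p * pd i g p := by
  simp [pd, fderiv_fun_mul hf hg]
  ring

lemma pd_comp {h : ℝ → ℝ} {h' : ℝ} (hh : HasDerivAt h h' (f p)) (hf : DifferentiableAt ℝ f p)
    (i : Fin 3) : pd i (fun q => h (f q)) p = h' * pd i f p := by
  have hcomp : HasFDerivAt (fun q => h (f q)) (h' • fderiv ℝ f p) p :=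
    hh.comp_hasFDerivAt p hf.hasFDerivAt
  simp [pd, hcomp.fderiv]

lemma pd_sq (hf : DifferentiableAt ℝ f p) (i : Fin 3) :
    pd i (fun q => f q ^ 2) p = 2 * f p * pd i f p := by
  simpa using pd_comp (hasDerivAt_pow 2 (f p)) hf i

lemma pd_rpow_const (hf : DifferentiableAt ℝ f p) (hfp : 0 < f p) (a : ℝ) (i : Fin 3) :
    pd i (fun q => f q ^ a) p = a * f p ^ (a - 1) * pd i f p :=
  pd_comp (Real.hasDerivAt_rpow_const (Or.inl hfp.ne')) hf i

end PartialDerivCalculus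

section SecondDerivatives

variable {φ : Pt → ℝ} {p : Pt}

lemma ContDiffAt.differentiableAt_fderiv (hφ : ContDiffAt ℝ 2 φ p) :
    DifferentiableAt ℝ (fderiv ℝ φ) p :=
  (hφ.fderiv_right (m := 1) le_rfl).differentiableAt one_ne_zero

lemma ContDiffAt.differentiableAt_pd (hφ : ContDiffAt ℝ 2 φ p) (i : Fin 3) :
    DifferentiableAt ℝ (pd i φ) p :=
  hφ.differentiableAt_fderiv.clm_apply (differentiableAt_const _)

lemma ContDiffAt.pd_pd_eq_fderiv_fderiv (hφ : ContDiffAt ℝ 2 φ p) (i j : Fin 3) :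
    pd i (pd j φ) p = fderiv ℝ (fderiv ℝ φ) p (Pi.single i 1) (Pi.single j 1) := by
  rw [pd, show pd j φ = fun q => fderiv ℝ φ q (Pi.single j 1) from rfl,
    fderiv_clm_apply hφ.differentiableAt_fderiv (differentiableAt_const _)]
  simp

lemma ContDiffAt.pd_pd_comm (hφ : ContDiffAt ℝ 2 φ p) (i j : Fin 3) :
    pd i (pd j φ) p = pd j (pd i φ) p := by
  rw [hφ.pd_pd_eq_fderiv_fderiv, hφ.pd_pd_eq_fderiv_fderiv, hφ.isSymmSndFDerivAt (by simp)]

lemma energy_flux_identity (hφ : ContDiffAt ℝ 2 φ p) (m : ℝ) :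
    (1/2) * pd 0 (fun q => (pd 0 φ q)^2 + (pd 1 φ q)^2 + (pd 2 φ q)^2 + m^2 * (φ q)^2) p
      - pd 1 (fun q => pd 0 φ q * pd 1 φ q) p - pd 2 (fun q => pd 0 φ q * pd 2 φ q) p
      = (negBox φ p + m^2 * φ p) * pd 0 φ p := by
  have dφ : DifferentiableAt ℝ φ p := hφ.differentiableAt two_ne_zero
  have d0 := hφ.differentiableAt_pd 0
  have d1 := hφ.differentiableAt_pd 1
  have d2 := hφ.differentiableAt_pd 2
  simp (disch := fun_prop) only [pd_add, pd_sq, pd_mul, pd_const]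
  rw [hφ.pd_pd_comm 0 1, hφ.pd_pd_comm 0 2, negBox]
  ring

end SecondDerivatives

section Radius

variable {p : Pt}

lemma rad_pos_iff : 0 < rad p ↔ 0 < (p 1)^2 + (p 2)^2 := Real.sqrt_pos

lemma differentiableAt_rad (hr : 0 < rad p) : DifferentiableAt ℝ rad p :=
  DifferentiableAt.sqrt (by fun_prop) (rad_pos_iff.mp hr).ne'

lemma pd_rad (hr : 0 < rad p) (i : Fin 3) :
    pd i rad p = (if i = 0 then 0 else p i) / rad p := by
  change pd i (fun q : Pt => Real.sqrt ((q 1)^2 + (q 2)^2)) p = _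
  rw [pd_comp (Real.hasDerivAt_sqrt (rad_pos_iff.mp hr).ne') (by fun_prop),
    pd_add (by fun_prop) (by fun_prop), pd_sq (by fun_prop), pd_sq (by fun_prop),
    pd_apply, pd_apply]
  fin_cases i <;> simp [rad] <;> field_simp

lemma div_rad_sq_add_div_rad_sq (hr : 0 < rad p) :
    (p 1 / rad p) ^ 2 + (p 2 / rad p) ^ 2 = 1 := by
  rw [div_pow, div_pow, ← add_div, rad, Real.sq_sqrt (by positivity), div_self]
  exact (rad_pos_iff.mp hr).ne'

end Radius

theorem weighted_multiplier_divergence_identity_general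
    (m γ : ℝ)
    (U : Set Pt) (hU : IsOpen U) (φ : Pt → ℝ) (hφ : ContDiffOn ℝ (⊤ : ℕ∞) φ U)
    (p : Pt) (hp : p ∈ U) (hr : 0 < rad p) (hrt : rad p < p 0) :
    (1/2) * pd 0 (fun q => (q 0 - rad q) ^ (-γ)
          * ((pd 0 φ q)^2 + (pd 1 φ q)^2 + (pd 2 φ q)^2 + m^2 * (φ q)^2)) p
      - pd 1 (fun q => (q 0 - rad q) ^ (-γ) * (pd 0 φ q * pd 1 φ q)) p
      - pd 2 (fun q => (q 0 - rad q) ^ (-γ) * (pd 0 φ q * pd 2 φ q)) p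
      + (γ/2) * (p 0 - rad p) ^ (-γ - 1) *
          (((p 1 / rad p) * pd 0 φ p + pd 1 φ p)^2
            + ((p 2 / rad p) * pd 0 φ p + pd 2 φ p)^2
            + m^2 * (φ p)^2)
      = (p 0 - rad p) ^ (-γ) * (negBox φ p + m^2 * φ p) * pd 0 φ p := by
  have hφ2 : ContDiffAt ℝ 2 φ p :=
    (hφ.contDiffAt (hU.mem_nhds hp)).of_le (WithTop.coe_le_coe.mpr le_top)
  have dφ : DifferentiableAt ℝ φ p := hφ2.differentiableAt two_ne_zero
  have d0 := hφ2.differentiableAt_pd 0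
  have d1 := hφ2.differentiableAt_pd 1
  have d2 := hφ2.differentiableAt_pd 2
  have hτ : 0 < p 0 - rad p := sub_pos.mpr hrt
  have dτ : DifferentiableAt ℝ (fun q : Pt => q 0 - rad q) p :=
    (differentiableAt_apply 0 p).sub (differentiableAt_rad hr)
  have dw : DifferentiableAt ℝ (fun q : Pt => (q 0 - rad q) ^ (-γ)) p :=
    dτ.rpow_const (Or.inl hτ.ne')
  rw [pd_mul dw (by fun_prop), pd_mul dw (by fun_prop), pd_mul dw (by fun_prop)]
  simp only [pd_rpow_const dτ hτ, pd_sub (differentiableAt_apply 0 p) (differentiableAt_rad hr),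
    pd_apply, pd_rad hr]
  norm_num [Fin.ext_iff]
  linear_combination (p 0 - rad p) ^ (-γ) * energy_flux_identity hφ2 m
    + γ / 2 * (p 0 - rad p) ^ (-γ - 1) * pd 0 φ p ^ 2 * div_rad_sq_add_div_rad_sq hr

/-- **Divergence identity for the weighted multiplier.** For `m ≥ 0`, `γ > 0`, a smooth `φ`
on an open set, and `f := ∂_t²φ − ∂_1²φ − ∂_2²φ + m²φ`, at every point with `0 < r < t`:
`½ ∂_t[(t−r)^{−γ}((∂_tφ)² + Σ(∂_aφ)² + m²φ²)] − Σ_a ∂_a[(t−r)^{−γ}∂_tφ ∂_aφ]`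
`+ (γ/2)(t−r)^{−γ−1}[Σ_a((x^a/r)∂_tφ + ∂_aφ)² + m²φ²] = (t−r)^{−γ} f ∂_tφ`. -/
theorem weighted_multiplier_divergence_identity
    (m γ : ℝ) (hm : 0 ≤ m) (hγ : 0 < γ)
    (U : Set Pt) (hU : IsOpen U) (φ : Pt → ℝ) (hφ : ContDiffOn ℝ (⊤ : ℕ∞) φ U)
    (p : Pt) (hp : p ∈ U) (hr : 0 < rad p) (hrt : rad p < p 0) :
    (1/2) * pd 0 (fun q => (q 0 - rad q) ^ (-γ)
          * ((pd 0 φ q)^2 + (pd 1 φ q)^2 + (pd 2 φ q)^2 + m^2 * (φ q)^2)) p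
      - pd 1 (fun q => (q 0 - rad q) ^ (-γ) * (pd 0 φ q * pd 1 φ q)) p
      - pd 2 (fun q => (q 0 - rad q) ^ (-γ) * (pd 0 φ q * pd 2 φ q)) p
      + (γ/2) * (p 0 - rad p) ^ (-γ - 1) *
          (((p 1 / rad p) * pd 0 φ p + pd 1 φ p)^2
            + ((p 2 / rad p) * pd 0 φ p + pd 2 φ p)^2
            + m^2 * (φ p)^2)
      = (p 0 - rad p) ^ (-γ) * (negBox φ p + m^2 * φ p) * pd 0 φ p :=
  weighted_multiplier_divergence_identity_general m γ U hU φ hφ p hp hr hrt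
end
end

section
/- L² estimate for the undifferentiated wave field via the conformal energy. There exists a universal constant C > 0 such that for every smooth function φ defined on a neighbourhood of K_{[s₀, s₁]} and vanishing near the conical boundary ∂K_{[s₀, s₁]}, and all s₀ ≤ s ≤ s₁: ‖(s/t) φ‖_{L²_f(H_s)} ≤ C ‖(s₀/t) φ‖_{L²_f(H_{s₀})} + C ∫_{s₀}^{s} τ^{−1} E_con(τ, φ)^{1/2} dτ. -/
noncomputable section

open MeasureTheory

open Filter Set Topology
open scoped ENNReal

/-!
Along a line `x = const`, the function `σ ↦ σ φ(√(σ² + |x|²), x)` has derivative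
`φ + (σ²/t) ∂_t φ`. On `H_σ` we have `t - r²/t = σ²/t`, so this derivative equals
`Kφ + φ - 2 x^a ∂̲_a φ`; since `|x^a| ≤ t` and `σ ≤ t`, dividing it by `t` leaves at most
`σ⁻¹ (|Kφ + φ| + 2 |σ ∂̲_1 φ| + 2 |σ ∂̲_2 φ|)`, whose `L²(dx)` norm is at most
`3 σ⁻¹ E_con(σ, φ)^{1/2}`. Integrate from `s₀` to `s`, use that `t` grows with `σ` on each line,
and take `L²` norms with Minkowski's integral inequality: this gives the estimate with `C = 3`.
Because `φ` vanishes near the conical boundary, every slice with `s₀ < σ < s₁` is supported in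
`|x| ≤ s₁²/2`, so all the integrals involved are finite.
-/

section L2

variable {α β : Type*} [MeasurableSpace α] [MeasurableSpace β] {μ : Measure α} {ν : Measure β}

lemma sqrt_integral_sq_eq_toReal_eLpNorm {f : β → ℝ} (hf : MemLp f 2 ν) :
    √(∫ x, f x ^ 2 ∂ν) = (eLpNorm f 2 ν).toReal := by
  rw [hf.eLpNorm_eq_integral_rpow_norm two_ne_zero ENNReal.ofNat_ne_top,
    ENNReal.toReal_ofReal (by positivity), Real.sqrt_eq_rpow]
  norm_num

lemma sqrt_integral_sq_le_of_abs_le_add {f g h : β → ℝ} (hfgh : ∀ x, |f x| ≤ g x + h x)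
    (hg : MemLp g 2 ν) (hh : MemLp h 2 ν) :
    √(∫ x, f x ^ 2 ∂ν) ≤ √(∫ x, g x ^ 2 ∂ν) + √(∫ x, h x ^ 2 ∂ν) := by
  have hgh : MemLp (g + h) 2 ν := hg.add hh
  have hsq : ∫ x, f x ^ 2 ∂ν ≤ ∫ x, (g + h) x ^ 2 ∂ν := by
    refine integral_mono_of_nonneg (ae_of_all _ fun x => sq_nonneg _)
      ((memLp_two_iff_integrable_sq hgh.1).1 hgh) (ae_of_all _ fun x => ?_)
    simpa only [Pi.add_apply, sq_abs] using pow_le_pow_left₀ (abs_nonneg (f x)) (hfgh x) 2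
  calc √(∫ x, f x ^ 2 ∂ν) ≤ √(∫ x, (g + h) x ^ 2 ∂ν) := Real.sqrt_le_sqrt hsq
    _ = (eLpNorm (g + h) 2 ν).toReal := sqrt_integral_sq_eq_toReal_eLpNorm hgh
    _ ≤ (eLpNorm g 2 ν).toReal + (eLpNorm h 2 ν).toReal := by
      rw [← ENNReal.toReal_add hg.eLpNorm_ne_top hh.eLpNorm_ne_top]
      exact ENNReal.toReal_mono (by finiteness) (eLpNorm_add_le hg.1 hh.1 one_le_two)
    _ = _ := by rw [sqrt_integral_sq_eq_toReal_eLpNorm hg, sqrt_integral_sq_eq_toReal_eLpNorm hh]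

lemma integral_mul_le_sqrt_mul_sqrt {f g : β → ℝ} (hf0 : 0 ≤ᵐ[ν] f) (hg0 : 0 ≤ᵐ[ν] g)
    (hf : MemLp f 2 ν) (hg : MemLp g 2 ν) :
    ∫ x, f x * g x ∂ν ≤ √(∫ x, f x ^ 2 ∂ν) * √(∫ x, g x ^ 2 ∂ν) := by
  simpa [Real.sqrt_eq_rpow] using integral_mul_le_Lp_mul_Lq_of_nonneg
    Real.HolderConjugate.two_two hf0 hg0 (by simpa using hf) (by simpa using hg)

/-- Minkowski's integral inequality in `L²`, with an integrable majorant of the inner norms. -/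
lemma sqrt_integral_sq_integral_le [SFinite μ] [SFinite ν] {k : α → β → ℝ} {G : α → ℝ}
    (hk0 : ∀ᵐ τ ∂μ, ∀ x, 0 ≤ k τ x) (hk : ∀ᵐ τ ∂μ, MemLp (k τ) 2 ν)
    (hkG : ∀ᵐ τ ∂μ, √(∫ x, k τ x ^ 2 ∂ν) ≤ G τ) (hG : Integrable G μ)
    (hB : MemLp (fun x => ∫ τ, k τ x ∂μ) 2 ν)
    (hkB : Integrable (fun z : α × β => k z.1 z.2 * ∫ τ, k τ z.2 ∂μ) (μ.prod ν)) :
    √(∫ x, (∫ τ, k τ x ∂μ) ^ 2 ∂ν) ≤ ∫ τ, G τ ∂μ := by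
  set B : β → ℝ := fun x => ∫ τ, k τ x ∂μ
  set X := √(∫ x, B x ^ 2 ∂ν)
  have hB0 : 0 ≤ᵐ[ν] B := ae_of_all _ fun x => integral_nonneg_of_ae (hk0.mono fun τ h => h x)
  have hXsq : X ^ 2 ≤ (∫ τ, G τ ∂μ) * X := calc
    X ^ 2 = ∫ x, ∫ τ, k τ x * B x ∂μ ∂ν := by
      rw [Real.sq_sqrt (integral_nonneg fun x => sq_nonneg _)]
      simp only [integral_mul_const, sq, B]
    _ = ∫ τ, ∫ x, k τ x * B x ∂ν ∂μ := (integral_integral_swap hkB).symm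
    _ ≤ ∫ τ, G τ * X ∂μ := by
      refine integral_mono_ae hkB.integral_prod_left (hG.mul_const X) ?_
      filter_upwards [hk0, hk, hkG] with τ hk0τ hkτ hGτ
      exact (integral_mul_le_sqrt_mul_sqrt (ae_of_all _ hk0τ) hB0 hkτ hB).trans
        (mul_le_mul_of_nonneg_right hGτ (Real.sqrt_nonneg _))
    _ = (∫ τ, G τ ∂μ) * X := integral_mul_const X G
  have hG0 : 0 ≤ ∫ τ, G τ ∂μ :=
    integral_nonneg_of_ae (hkG.mono fun τ hτ => (Real.sqrt_nonneg _).trans hτ)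
  nlinarith [Real.sqrt_nonneg (∫ x, B x ^ 2 ∂ν)]

end L2

section IndicatorBounds

lemma memLp_of_abs_le_indicator {β : Type*} [MeasurableSpace β] {ν : Measure β} {f : β → ℝ}
    (hf : AEStronglyMeasurable f ν) {S : Set β} (hS : MeasurableSet S) (hνS : ν S ≠ ⊤) {M : ℝ}
    (hfM : ∀ᵐ x ∂ν, |f x| ≤ S.indicator (fun _ => M) x) (p : ℝ≥0∞) : MemLp f p ν :=
  (memLp_indicator_const p hS M (Or.inr hνS)).of_le hf
    (hfM.mono fun _ hx => hx.trans (le_abs_self _))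

lemma exists_abs_le_indicator {E : Type*} [NormedAddCommGroup E] [ProperSpace E]
    {f : ℝ → E → ℝ} {a b R : ℝ} (hf : ContinuousOn (Function.uncurry f) (Icc a b ×ˢ univ))
    (hf0 : ∀ τ ∈ Ioo a b, ∀ x ∉ Metric.closedBall 0 R, f τ x = 0) :
    ∃ M, ∀ τ ∈ Ioo a b, ∀ x, |f τ x| ≤ (Metric.closedBall 0 R).indicator (fun _ => M) x := by
  obtain ⟨M, hM⟩ := (isCompact_Icc.prod (isCompact_closedBall 0 R)).exists_bound_of_continuousOn
    (hf.mono (prod_mono subset_rfl (subset_univ _)))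
  refine ⟨M, fun τ hτ x => ?_⟩
  by_cases hx : x ∈ Metric.closedBall 0 R
  · rw [indicator_of_mem hx]
    exact hM (τ, x) ⟨Ioo_subset_Icc_self hτ, hx⟩
  · simp [indicator_of_notMem hx, hf0 τ hτ x hx]

lemma abs_setIntegral_le_indicator {E : Type*} [NormedAddCommGroup E] {f : ℝ → E → ℝ}
    {a b R M : ℝ} (hab : a ≤ b)
    (hfM : ∀ τ ∈ Ioo a b, ∀ x, |f τ x| ≤ (Metric.closedBall 0 R).indicator (fun _ => M) x)
    (x : E) :
    |∫ τ in Ioo a b, f τ x| ≤ (Metric.closedBall 0 R).indicator (fun _ => M * (b - a)) x := by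
  by_cases hx : x ∈ Metric.closedBall 0 R
  · rw [indicator_of_mem hx]
    have h := norm_setIntegral_le_of_norm_le_const (f := fun τ => f τ x) (μ := volume)
      measure_Ioo_lt_top
      fun τ hτ => by simpa [indicator_of_mem hx] using hfM τ hτ x
    rwa [Real.volume_real_Ioo_of_le hab] at h
  · rw [indicator_of_notMem hx, setIntegral_eq_zero_of_forall_eq_zero fun τ hτ => ?_, abs_zero]
    simpa [indicator_of_notMem hx] using hfM τ hτ x

end IndicatorBounds

section Hyperboloid

lemma hyp_zero_sq (s : ℝ) (x : Fin 2 → ℝ) : hyp s x 0 ^ 2 = s ^ 2 + rad (hyp s x) ^ 2 := by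
  simp only [hyp, rad, Matrix.cons_val]
  rw [Real.sq_sqrt (by positivity), Real.sq_sqrt (by positivity)]
  ring

lemma continuous_rad : Continuous rad := by
  unfold rad
  fun_prop

lemma hyp_zero_sq_sub_rad_sq (τ : ℝ) (x : Fin 2 → ℝ) :
    hyp τ x 0 ^ 2 - rad (hyp τ x) ^ 2 = τ ^ 2 := by
  rw [hyp_zero_sq]; ring

lemma hyp_zero_pos {s : ℝ} (hs : s ≠ 0) (x : Fin 2 → ℝ) : 0 < hyp s x 0 := by
  simp only [hyp, Matrix.cons_val]
  positivity

lemma hyp_zero_mono {τ s : ℝ} (hτ : 0 ≤ τ) (hτs : τ ≤ s) (x : Fin 2 → ℝ) :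
    hyp τ x 0 ≤ hyp s x 0 := by
  simp only [hyp, Matrix.cons_val]
  gcongr

lemma le_hyp_zero (s : ℝ) (x : Fin 2 → ℝ) : s ≤ hyp s x 0 := by
  simp only [hyp, Matrix.cons_val]
  exact Real.le_sqrt_of_sq_le (by nlinarith)

lemma abs_hyp_le_hyp_zero (s : ℝ) (x : Fin 2 → ℝ) (a : Fin 2) : |hyp s x a.succ| ≤ hyp s x 0 := by
  rw [← Real.sqrt_sq_eq_abs]
  fin_cases a <;> simp [hyp] <;> gcongr <;> nlinarith

lemma norm_le_rad_hyp (s : ℝ) (x : Fin 2 → ℝ) : ‖x‖ ≤ rad (hyp s x) := by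
  refine (pi_norm_le_iff_of_nonneg (Real.sqrt_nonneg _)).2 fun i => ?_
  rw [Real.norm_eq_abs, ← Real.sqrt_sq_eq_abs]
  fin_cases i <;> simp [hyp] <;> gcongr <;> nlinarith

lemma continuous_hyp : Continuous fun z : ℝ × (Fin 2 → ℝ) => hyp z.1 z.2 := by
  unfold hyp
  fun_prop

lemma hasDerivAt_hyp {s : ℝ} (hs : s ≠ 0) (x : Fin 2 → ℝ) :
    HasDerivAt (fun σ => hyp σ x) ((s / hyp s x 0) • Pi.single 0 1) s := by
  refine hasDerivAt_pi.2 fun i => ?_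
  fin_cases i <;> simp only [hyp, Fin.zero_eta, Fin.mk_one, Fin.reduceFinMk, Matrix.cons_val,
    Pi.smul_apply, Pi.single_apply, smul_eq_mul]
  · have h := (((hasDerivAt_pow 2 s).add_const ((x 0) ^ 2)).add_const ((x 1) ^ 2)).sqrt
      (by positivity)
    refine h.congr_deriv ?_
    simp only [if_true, mul_one]
    field_simp
    norm_num
  all_goals simpa using hasDerivAt_const s _

lemma hasDerivAt_mul_comp_hyp {φ : Pt → ℝ} (hφ : Differentiable ℝ φ) {s : ℝ} (hs : s ≠ 0)
    (x : Fin 2 → ℝ) :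
    HasDerivAt (fun σ => σ * φ (hyp σ x))
      (φ (hyp s x) + s ^ 2 / hyp s x 0 * pd 0 φ (hyp s x)) s := by
  have h : HasDerivAt (fun σ => σ * φ (hyp σ x))
      (1 * φ (hyp s x) + s * fderiv ℝ φ (hyp s x) ((s / hyp s x 0) • Pi.single 0 1)) s :=
    (hasDerivAt_id' s).mul ((hφ _).hasFDerivAt.comp_hasDerivAt s (hasDerivAt_hyp hs x))
  convert h using 1
  simp only [pd, map_smul, smul_eq_mul]
  ring

end Hyperboloid

section ConformalDensity

lemma rad_sq (p : Pt) : rad p ^ 2 = p 1 ^ 2 + p 2 ^ 2 :=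
  Real.sq_sqrt (by positivity)

def conformalDensity (φ : Pt → ℝ) (τ : ℝ) (x : Fin 2 → ℝ) : ℝ :=
  (τ * ubd 0 φ (hyp τ x)) ^ 2 + (τ * ubd 1 φ (hyp τ x)) ^ 2
    + (Kvf φ (hyp τ x) + φ (hyp τ x)) ^ 2

def conformalMajorant (φ : Pt → ℝ) (τ : ℝ) (x : Fin 2 → ℝ) : ℝ :=
  τ⁻¹ * (|Kvf φ (hyp τ x) + φ (hyp τ x)| + 2 * |τ * ubd 0 φ (hyp τ x)|
    + 2 * |τ * ubd 1 φ (hyp τ x)|)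

lemma conformalMajorant_nonneg {τ : ℝ} (hτ : 0 ≤ τ) (φ : Pt → ℝ) (x : Fin 2 → ℝ) :
    0 ≤ conformalMajorant φ τ x := by
  unfold conformalMajorant
  positivity

lemma conformalMajorant_sq_le (τ : ℝ) (φ : Pt → ℝ) (x : Fin 2 → ℝ) :
    conformalMajorant φ τ x ^ 2 ≤ (3 * τ⁻¹) ^ 2 * conformalDensity φ τ x := by
  unfold conformalMajorant conformalDensity
  rw [← sq_abs (τ * ubd 0 φ _), ← sq_abs (τ * ubd 1 φ _), ← sq_abs (Kvf φ _ + φ _)]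
  set a := |Kvf φ (hyp τ x) + φ (hyp τ x)|
  set b := |τ * ubd 0 φ (hyp τ x)|
  set c := |τ * ubd 1 φ (hyp τ x)|
  -- Cauchy–Schwarz with the weights `(1, 2, 2)`, whose squares sum to `9`
  have h : (a + 2 * b + 2 * c) ^ 2 ≤ 9 * (b ^ 2 + c ^ 2 + a ^ 2) := by
    nlinarith [sq_nonneg (2 * a - b), sq_nonneg (2 * a - c), sq_nonneg (b - c)]
  calc (τ⁻¹ * (a + 2 * b + 2 * c)) ^ 2 = τ⁻¹ ^ 2 * (a + 2 * b + 2 * c) ^ 2 := by ring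
    _ ≤ τ⁻¹ ^ 2 * (9 * (b ^ 2 + c ^ 2 + a ^ 2)) := by gcongr
    _ = _ := by ring

lemma Kvf_add_sub_ubd (φ : Pt → ℝ) {p : Pt} (hp : p 0 ≠ 0) :
    Kvf φ p + φ p - 2 * (p 1 * ubd 0 φ p + p 2 * ubd 1 φ p)
      = φ p + (p 0 ^ 2 - rad p ^ 2) / p 0 * pd 0 φ p := by
  simp only [Kvf, ubd, Fin.succ_zero_eq_one, Fin.succ_one_eq_two, rad_sq]
  field_simp
  ring

lemma abs_div_hyp_zero_le_conformalMajorant (φ : Pt → ℝ) {τ : ℝ} (hτ : 0 < τ)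
    (x : Fin 2 → ℝ) :
    |φ (hyp τ x) + τ ^ 2 / hyp τ x 0 * pd 0 φ (hyp τ x)| / hyp τ x 0
      ≤ conformalMajorant φ τ x := by
  set p := hyp τ x
  have hp : 0 < p 0 := hyp_zero_pos hτ.ne' x
  have hpτ : τ ≤ p 0 := le_hyp_zero τ x
  have hcoord (a : Fin 2) : |p a.succ / p 0| ≤ 1 := by
    rw [abs_div, abs_of_pos hp]
    exact div_le_one_of_le₀ (abs_hyp_le_hyp_zero τ x a) hp.le
  have hid : (φ p + τ ^ 2 / p 0 * pd 0 φ p) / p 0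
      = (p 0)⁻¹ * (Kvf φ p + φ p) - 2 * (p 1 / p 0) * ubd 0 φ p
        - 2 * (p 2 / p 0) * ubd 1 φ p := by
    rw [← hyp_zero_sq_sub_rad_sq τ x,
      ← Kvf_add_sub_ubd φ hp.ne']
    field_simp
    ring
  have hK : |(p 0)⁻¹ * (Kvf φ p + φ p)| ≤ τ⁻¹ * |Kvf φ p + φ p| := by
    rw [abs_mul, abs_of_pos (inv_pos.2 hp)]
    gcongr
  have hu (a : Fin 2) : |2 * (p a.succ / p 0) * ubd a φ p| ≤ τ⁻¹ * (2 * |τ * ubd a φ p|) := by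
    rw [abs_mul, abs_mul, abs_mul, abs_of_pos hτ, abs_two]
    calc 2 * |p a.succ / p 0| * |ubd a φ p| ≤ 2 * 1 * |ubd a φ p| := by gcongr; exact hcoord a
      _ = τ⁻¹ * (2 * (τ * |ubd a φ p|)) := by field_simp
  rw [← abs_of_pos hp, ← abs_div, abs_of_pos hp, hid]
  unfold conformalMajorant
  have hu0 := hu 0
  have hu1 := hu 1
  simp only [Fin.succ_zero_eq_one, Fin.succ_one_eq_two] at hu0 hu1
  linarith [abs_sub ((p 0)⁻¹ * (Kvf φ p + φ p) - 2 * (p 1 / p 0) * ubd 0 φ p)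
    (2 * (p 2 / p 0) * ubd 1 φ p), abs_sub ((p 0)⁻¹ * (Kvf φ p + φ p)) (2 * (p 1 / p 0) * ubd 0 φ p)]

end ConformalDensity

section Vanishing

/-- Far out, `H_τ` runs within distance `1` of the light cone: `t - r = τ²/(t + r) ≤ τ²/(2r)`. -/
lemma hyp_zero_lt_rad_add_one {τ R : ℝ} (hτ : τ ^ 2 ≤ R ^ 2) {x : Fin 2 → ℝ}
    (hx : x ∉ Metric.closedBall 0 (R ^ 2 / 2)) : hyp τ x 0 < rad (hyp τ x) + 1 := by
  have hxr : R ^ 2 / 2 < rad (hyp τ x) :=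
    (not_le.1 (by simpa using hx)).trans_le (norm_le_rad_hyp τ x)
  have hT : 0 ≤ hyp τ x 0 := (Real.sqrt_nonneg _)
  nlinarith [hyp_zero_sq τ x]

variable {s0 s1 τ : ℝ} {φ : Pt → ℝ} {x : Fin 2 → ℝ}

lemma VanishNearBdry.apply_hyp_eq_zero (h : VanishNearBdry s0 s1 φ) (hs0 : 0 < s0)
    (hτ : τ ∈ Icc s0 s1) (hx : x ∉ Metric.closedBall 0 (s1 ^ 2 / 2)) : φ (hyp τ x) = 0 := by
  obtain ⟨ε, hε, hφ⟩ := h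
  have hτ0 : 0 < τ := hs0.trans_le hτ.1
  have hT := hyp_zero_lt_rad_add_one (pow_le_pow_left₀ hτ0.le hτ.2 2) hx
  refine hφ _ (hyp_zero_pos hτ0.ne' x) ?_ ?_ (by linarith)
  · rw [hyp_zero_sq_sub_rad_sq]; exact pow_le_pow_left₀ hs0.le hτ.1 2
  · rw [hyp_zero_sq_sub_rad_sq]; exact pow_le_pow_left₀ hτ0.le hτ.2 2

lemma VanishNearBdry.eventuallyEq_zero_hyp (h : VanishNearBdry s0 s1 φ) (hs0 : 0 < s0)
    (hτ : τ ∈ Ioo s0 s1) (hx : x ∉ Metric.closedBall 0 (s1 ^ 2 / 2)) :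
    φ =ᶠ[𝓝 (hyp τ x)] 0 := by
  obtain ⟨ε, hε, hφ⟩ := h
  have hT := hyp_zero_lt_rad_add_one (pow_le_pow_left₀ (hs0.trans hτ.1).le hτ.2.le 2) hx
  have hq : Continuous fun p : Pt => p 0 ^ 2 - rad p ^ 2 := by
    have := continuous_rad
    fun_prop
  have ht : Continuous fun p : Pt => p 0 - 1 - ε := by fun_prop
  have hq0 := hyp_zero_sq_sub_rad_sq τ x
  have hτ0 : 0 < τ := hs0.trans hτ.1
  have h0 : ∀ᶠ p : Pt in 𝓝 (hyp τ x), 0 < p 0 :=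
    continuousAt_const.eventually_lt (continuous_apply 0).continuousAt (hyp_zero_pos hτ0.ne' x)
  have h1 : ∀ᶠ p : Pt in 𝓝 (hyp τ x), s0 ^ 2 < p 0 ^ 2 - rad p ^ 2 :=
    continuousAt_const.eventually_lt hq.continuousAt (by rw [hq0]; gcongr; exact hτ.1)
  have h2 : ∀ᶠ p : Pt in 𝓝 (hyp τ x), p 0 ^ 2 - rad p ^ 2 < s1 ^ 2 :=
    hq.continuousAt.eventually_lt continuousAt_const (by rw [hq0]; gcongr; exact hτ.2)
  have h3 : ∀ᶠ p : Pt in 𝓝 (hyp τ x), p 0 - 1 - ε < rad p :=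
    ht.continuousAt.eventually_lt continuous_rad.continuousAt (by linarith)
  filter_upwards [h0, h1, h2, h3] with p h0 h1 h2 h3
  exact hφ p h0 h1.le h2.le h3

lemma VanishNearBdry.pd_hyp_eq_zero (h : VanishNearBdry s0 s1 φ) (hs0 : 0 < s0)
    (hτ : τ ∈ Ioo s0 s1) (hx : x ∉ Metric.closedBall 0 (s1 ^ 2 / 2)) (i : Fin 3) :
    pd i φ (hyp τ x) = 0 := by
  simp [pd, (h.eventuallyEq_zero_hyp hs0 hτ hx).fderiv_eq]

lemma VanishNearBdry.conformalMajorant_eq_zero (h : VanishNearBdry s0 s1 φ) (hs0 : 0 < s0)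
    (hτ : τ ∈ Ioo s0 s1) (hx : x ∉ Metric.closedBall 0 (s1 ^ 2 / 2)) :
    conformalMajorant φ τ x = 0 := by
  simp [conformalMajorant, Kvf, ubd, h.pd_hyp_eq_zero hs0 hτ hx,
    h.apply_hyp_eq_zero hs0 (Ioo_subset_Icc_self hτ) hx]

lemma VanishNearBdry.conformalDensity_eq_zero (h : VanishNearBdry s0 s1 φ) (hs0 : 0 < s0)
    (hτ : τ ∈ Ioo s0 s1) (hx : x ∉ Metric.closedBall 0 (s1 ^ 2 / 2)) :
    conformalDensity φ τ x = 0 := by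
  simp [conformalDensity, Kvf, ubd, h.pd_hyp_eq_zero hs0 hτ hx,
    h.apply_hyp_eq_zero hs0 (Ioo_subset_Icc_self hτ) hx]

end Vanishing

section Regularity

variable {φ : Pt → ℝ}

lemma continuous_pd (hφ : ContDiff ℝ 1 φ) (i : Fin 3) : Continuous (pd i φ) :=
  (hφ.continuous_fderiv one_ne_zero).clm_apply continuous_const

lemma continuousOn_conformalMajorant (hφ : ContDiff ℝ 1 φ) :
    ContinuousOn (Function.uncurry (conformalMajorant φ)) (Ioi 0 ×ˢ univ) := by
  have := continuous_pd hφ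
  have := continuous_hyp
  have := continuous_rad
  have := hφ.continuous
  have hT : ∀ z ∈ Ioi (0 : ℝ) ×ˢ (univ : Set (Fin 2 → ℝ)), hyp z.1 z.2 0 ≠ 0 :=
    fun z hz => (hyp_zero_pos (ne_of_gt hz.1) _).ne'
  have hτ : ∀ z ∈ Ioi (0 : ℝ) ×ˢ (univ : Set (Fin 2 → ℝ)), z.1 ≠ 0 := fun z hz => ne_of_gt hz.1
  simp only [Function.uncurry_def, conformalMajorant, Kvf, ubd]
  fun_prop (disch := assumption)

lemma continuousOn_conformalDensity (hφ : ContDiff ℝ 1 φ) :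
    ContinuousOn (Function.uncurry (conformalDensity φ)) (Ioi 0 ×ˢ univ) := by
  have := continuous_pd hφ
  have := continuous_hyp
  have := continuous_rad
  have := hφ.continuous
  have hT : ∀ z ∈ Ioi (0 : ℝ) ×ˢ (univ : Set (Fin 2 → ℝ)), hyp z.1 z.2 0 ≠ 0 :=
    fun z hz => (hyp_zero_pos (ne_of_gt hz.1) _).ne'
  simp only [Function.uncurry_def, conformalDensity, Kvf, ubd]
  fun_prop (disch := assumption)

lemma measurable_conformalMajorant (hφ : ContDiff ℝ 1 φ) :
    Measurable (Function.uncurry (conformalMajorant φ)) := by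
  have := fun i => (continuous_pd hφ i).measurable
  have := continuous_hyp.measurable
  have := continuous_rad.measurable
  have := hφ.continuous.measurable
  simp only [Function.uncurry_def, conformalMajorant, Kvf, ubd]
  fun_prop

lemma measurable_conformalDensity (hφ : ContDiff ℝ 1 φ) :
    Measurable (Function.uncurry (conformalDensity φ)) := by
  have := fun i => (continuous_pd hφ i).measurable
  have := continuous_hyp.measurable
  have := continuous_rad.measurable
  have := hφ.continuous.measurable
  simp only [Function.uncurry_def, conformalDensity, Kvf, ubd]
  fun_prop

lemma continuous_div_hyp_zero_mul (hφ : Continuous φ) {τ : ℝ} (hτ : τ ≠ 0) :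
    Continuous fun x => τ / hyp τ x 0 * φ (hyp τ x) := by
  have : Continuous fun x => hyp τ x := by unfold hyp; fun_prop
  have hT : ∀ x, hyp τ x 0 ≠ 0 := fun x => (hyp_zero_pos hτ x).ne'
  fun_prop (disch := assumption)

lemma continuousOn_deriv_mul_comp_hyp (hφ : ContDiff ℝ 1 φ) (x : Fin 2 → ℝ) :
    ContinuousOn (fun τ => φ (hyp τ x) + τ ^ 2 / hyp τ x 0 * pd 0 φ (hyp τ x)) (Ioi 0) := by
  have : Continuous fun τ => hyp τ x := by unfold hyp; fun_prop
  have := continuous_pd hφ 0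
  have := hφ.continuous
  have hT : ∀ τ ∈ Ioi (0 : ℝ), hyp τ x 0 ≠ 0 := fun τ hτ => (hyp_zero_pos (ne_of_gt hτ) x).ne'
  fun_prop (disch := assumption)

end Regularity

section Estimate

variable {s0 s1 s : ℝ} {φ : Pt → ℝ}

lemma Econ_eq_integral_conformalDensity (τ : ℝ) (φ : Pt → ℝ) :
    Econ τ φ = ∫ x, conformalDensity φ τ x := rfl

lemma abs_div_hyp_zero_mul_le (hφ : ContDiff ℝ 1 φ) (hs0 : 0 < s0) (hs : s0 ≤ s)
    (x : Fin 2 → ℝ) :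
    |s / hyp s x 0 * φ (hyp s x)|
      ≤ |s0 / hyp s0 x 0 * φ (hyp s0 x)| + ∫ τ in Ioo s0 s, conformalMajorant φ τ x := by
  have hpos : Icc s0 s ⊆ Ioi 0 := fun τ hτ => hs0.trans_le hτ.1
  have hTs : 0 < hyp s x 0 := hyp_zero_pos (hs0.trans_le hs).ne' x
  set g := fun τ => φ (hyp τ x) + τ ^ 2 / hyp τ x 0 * pd 0 φ (hyp τ x)
  have hftc : ∫ τ in s0..s, g τ = s * φ (hyp s x) - s0 * φ (hyp s0 x) := by
    refine intervalIntegral.integral_eq_sub_of_hasDerivAt (f := fun σ => σ * φ (hyp σ x))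
      (fun τ hτ => ?_)
      (((continuousOn_deriv_mul_comp_hyp hφ x).mono hpos).intervalIntegrable_of_Icc hs)
    rw [uIcc_of_le hs] at hτ
    exact hasDerivAt_mul_comp_hyp (hφ.differentiable one_ne_zero) (hpos hτ).ne' x
  have hg : ‖∫ τ in s0..s, g τ / hyp s x 0‖ ≤ ∫ τ in s0..s, conformalMajorant φ τ x := by
    refine intervalIntegral.norm_integral_le_of_norm_le hs (ae_of_all _ fun τ hτ => ?_)
      (((continuousOn_conformalMajorant hφ).comp (Continuous.prodMk_left x).continuousOn
        fun τ hτ => ⟨hpos hτ, mem_univ x⟩).intervalIntegrable_of_Icc hs)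
    have hτ0 : 0 < τ := hs0.trans hτ.1
    calc ‖g τ / hyp s x 0‖ = |g τ| / hyp s x 0 := by rw [Real.norm_eq_abs, abs_div, abs_of_pos hTs]
      _ ≤ |g τ| / hyp τ x 0 := by
        gcongr
        exacts [hyp_zero_pos hτ0.ne' x, hyp_zero_mono hτ0.le hτ.2 x]
      _ ≤ conformalMajorant φ τ x := abs_div_hyp_zero_le_conformalMajorant φ hτ0 x
  rw [intervalIntegral.integral_div, hftc, intervalIntegral.integral_of_le hs,
    integral_Ioc_eq_integral_Ioo, Real.norm_eq_abs, abs_div, abs_of_pos hTs] at hg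
  have habs (σ : ℝ) (hσ : 0 < σ) :
      |σ / hyp σ x 0 * φ (hyp σ x)| = |σ * φ (hyp σ x)| / hyp σ x 0 := by
    rw [div_mul_eq_mul_div, abs_div, abs_of_pos (hyp_zero_pos hσ.ne' x)]
  rw [habs s (hs0.trans_le hs), habs s0 hs0,
    show s * φ (hyp s x) = s0 * φ (hyp s0 x) + (s * φ (hyp s x) - s0 * φ (hyp s0 x)) by ring]
  calc |s0 * φ (hyp s0 x) + (s * φ (hyp s x) - s0 * φ (hyp s0 x))| / hyp s x 0
      ≤ |s0 * φ (hyp s0 x)| / hyp s x 0 + |s * φ (hyp s x) - s0 * φ (hyp s0 x)| / hyp s x 0 := by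
        rw [← add_div]
        gcongr
        exact abs_add_le _ _
    _ ≤ |s0 * φ (hyp s0 x)| / hyp s0 x 0 + ∫ τ in Ioo s0 s, conformalMajorant φ τ x := by
        gcongr
        exacts [hyp_zero_pos hs0.ne' x, hyp_zero_mono hs0.le hs x]

lemma VanishNearBdry.memLp_div_hyp_zero_mul (h : VanishNearBdry s0 s1 φ) (hφ : Continuous φ)
    (hs0 : 0 < s0) {τ : ℝ} (hτ : τ ∈ Icc s0 s1) :
    MemLp (fun x => τ / hyp τ x 0 * φ (hyp τ x)) 2 volume :=
  (continuous_div_hyp_zero_mul hφ (hs0.trans_le hτ.1).ne').memLp_of_hasCompactSupport <|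
    HasCompactSupport.intro (isCompact_closedBall 0 (s1 ^ 2 / 2)) fun x hx => by
      simp [h.apply_hyp_eq_zero hs0 hτ hx]

lemma VanishNearBdry.memLp_conformalMajorant (h : VanishNearBdry s0 s1 φ) (hφ : ContDiff ℝ 1 φ)
    (hs0 : 0 < s0) {τ : ℝ} (hτ : τ ∈ Ioo s0 s1) : MemLp (conformalMajorant φ τ) 2 volume :=
  ((continuousOn_conformalMajorant hφ).comp_continuous (Continuous.prodMk_right τ)
    fun _ => ⟨hs0.trans hτ.1, mem_univ _⟩).memLp_of_hasCompactSupport <|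
    HasCompactSupport.intro (isCompact_closedBall 0 (s1 ^ 2 / 2)) fun _ hx =>
      h.conformalMajorant_eq_zero hs0 hτ hx

lemma VanishNearBdry.integrable_conformalDensity (h : VanishNearBdry s0 s1 φ)
    (hφ : ContDiff ℝ 1 φ) (hs0 : 0 < s0) {τ : ℝ} (hτ : τ ∈ Ioo s0 s1) :
    Integrable (conformalDensity φ τ) volume :=
  ((continuousOn_conformalDensity hφ).comp_continuous (Continuous.prodMk_right τ)
    fun _ => ⟨hs0.trans hτ.1, mem_univ _⟩).integrable_of_hasCompactSupport <|
    HasCompactSupport.intro (isCompact_closedBall 0 (s1 ^ 2 / 2)) fun _ hx =>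
      h.conformalDensity_eq_zero hs0 hτ hx

lemma VanishNearBdry.sqrt_integral_conformalMajorant_sq_le (h : VanishNearBdry s0 s1 φ)
    (hφ : ContDiff ℝ 1 φ) (hs0 : 0 < s0) {τ : ℝ} (hτ : τ ∈ Ioo s0 s1) :
    √(∫ x, conformalMajorant φ τ x ^ 2) ≤ 3 * (τ⁻¹ * √(Econ τ φ)) := by
  have hτ0 : 0 ≤ τ := (hs0.trans hτ.1).le
  calc √(∫ x, conformalMajorant φ τ x ^ 2)
      ≤ √(∫ x, (3 * τ⁻¹) ^ 2 * conformalDensity φ τ x) := by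
        refine Real.sqrt_le_sqrt (integral_mono_of_nonneg (ae_of_all _ fun x => sq_nonneg _)
          ((h.integrable_conformalDensity hφ hs0 hτ).const_mul _)
          (ae_of_all _ fun x => conformalMajorant_sq_le τ φ x))
    _ = 3 * (τ⁻¹ * √(Econ τ φ)) := by
        rw [integral_const_mul, ← Econ_eq_integral_conformalDensity, Real.sqrt_mul (by positivity),
          Real.sqrt_sq (by positivity)]
        ring

lemma VanishNearBdry.exists_conformalMajorant_le_indicator (h : VanishNearBdry s0 s1 φ)
    (hφ : ContDiff ℝ 1 φ) (hs0 : 0 < s0) (hs : s ≤ s1) :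
    ∃ M, ∀ τ ∈ Ioo s0 s, ∀ x,
      |conformalMajorant φ τ x| ≤ (Metric.closedBall 0 (s1 ^ 2 / 2)).indicator (fun _ => M) x :=
  exists_abs_le_indicator ((continuousOn_conformalMajorant hφ).mono
      (prod_mono (fun _ hτ => hs0.trans_le hτ.1) subset_rfl))
    fun _ hτ _ hx => h.conformalMajorant_eq_zero hs0 ⟨hτ.1, hτ.2.trans_le hs⟩ hx

lemma VanishNearBdry.memLp_integral_conformalMajorant (h : VanishNearBdry s0 s1 φ)
    (hφ : ContDiff ℝ 1 φ) (hs0 : 0 < s0) (hs : s ∈ Icc s0 s1) :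
    MemLp (fun x => ∫ τ in Ioo s0 s, conformalMajorant φ τ x) 2 volume := by
  obtain ⟨M, hM⟩ := h.exists_conformalMajorant_le_indicator hφ hs0 hs.2
  exact memLp_of_abs_le_indicator
    (measurable_conformalMajorant hφ).stronglyMeasurable.integral_prod_left'.aestronglyMeasurable
    measurableSet_closedBall measure_closedBall_lt_top.ne
    (ae_of_all _ (abs_setIntegral_le_indicator hs.1 hM)) 2

lemma VanishNearBdry.integrable_conformalMajorant_mul_integral (h : VanishNearBdry s0 s1 φ)
    (hφ : ContDiff ℝ 1 φ) (hs0 : 0 < s0) (hs : s ∈ Icc s0 s1) :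
    Integrable (fun z : ℝ × (Fin 2 → ℝ) =>
        conformalMajorant φ z.1 z.2 * ∫ τ in Ioo s0 s, conformalMajorant φ τ z.2)
      ((volume.restrict (Ioo s0 s)).prod volume) := by
  obtain ⟨M, hM⟩ := h.exists_conformalMajorant_le_indicator hφ hs0 hs.2
  have hk := measurable_conformalMajorant hφ
  rw [← memLp_one_iff_integrable]
  refine memLp_of_abs_le_indicator (f := fun z : ℝ × (Fin 2 → ℝ) =>
      conformalMajorant φ z.1 z.2 * ∫ τ in Ioo s0 s, conformalMajorant φ τ z.2)
    (S := univ ×ˢ Metric.closedBall 0 (s1 ^ 2 / 2))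
    (M := M * (M * (s - s0)))
    (hk.mul (hk.stronglyMeasurable.integral_prod_left'.measurable.comp measurable_snd)).aestronglyMeasurable
    (MeasurableSet.univ.prod measurableSet_closedBall) ?_ ?_ 1
  · rw [Measure.prod_prod, Measure.restrict_apply_univ]
    exact ENNReal.mul_ne_top measure_Ioo_lt_top.ne measure_closedBall_lt_top.ne
  filter_upwards [Measure.quasiMeasurePreserving_fst.ae (ae_restrict_mem measurableSet_Ioo)]
    with z hz
  have hkz := hM z.1 hz z.2
  have hBz := abs_setIntegral_le_indicator hs.1 hM z.2
  by_cases hx : z.2 ∈ Metric.closedBall 0 (s1 ^ 2 / 2)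
  · rw [indicator_of_mem hx] at hkz hBz
    rw [indicator_of_mem (mk_mem_prod (mem_univ _) hx), abs_mul]
    exact mul_le_mul hkz hBz (abs_nonneg _) ((abs_nonneg _).trans hkz)
  · rw [indicator_of_notMem hx, abs_nonpos_iff] at hkz
    simp [indicator_of_notMem (fun h : z ∈ univ ×ˢ _ => hx h.2), hkz]

lemma VanishNearBdry.integrableOn_inv_mul_sqrt_Econ (h : VanishNearBdry s0 s1 φ)
    (hφ : ContDiff ℝ 1 φ) (hs0 : 0 < s0) (hs : s ≤ s1) :
    IntegrableOn (fun τ => τ⁻¹ * √(Econ τ φ)) (Ioo s0 s) := by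
  set K := Metric.closedBall (0 : Fin 2 → ℝ) (s1 ^ 2 / 2)
  obtain ⟨M, hM⟩ := exists_abs_le_indicator ((continuousOn_conformalDensity hφ).mono
      (prod_mono (fun _ hτ => hs0.trans_le hτ.1) subset_rfl))
    fun _ hτ _ hx => h.conformalDensity_eq_zero hs0 ⟨hτ.1, hτ.2.trans_le hs⟩ hx
  have hE : ∀ τ ∈ Ioo s0 s, Econ τ φ ≤ M * volume.real K := fun τ hτ => calc
    Econ τ φ ≤ ∫ x, K.indicator (fun _ => M) x :=
      integral_mono (h.integrable_conformalDensity hφ hs0 ⟨hτ.1, hτ.2.trans_le hs⟩)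
        ((integrable_indicator_iff measurableSet_closedBall).2
          (integrableOn_const measure_closedBall_lt_top.ne))
        fun x => (le_abs_self _).trans (hM τ hτ x)
    _ = M * volume.real K := by
      rw [integral_indicator_const _ measurableSet_closedBall, smul_eq_mul, mul_comm]
  refine Measure.integrableOn_of_bounded (M := s0⁻¹ * √(M * volume.real K))
    measure_Ioo_lt_top.ne (measurable_inv.mul
      (measurable_conformalDensity hφ).stronglyMeasurable.integral_prod_right'.measurable.sqrt
      ).aestronglyMeasurable ?_
  filter_upwards [ae_restrict_mem measurableSet_Ioo] with τ hτ
  have hτ0 : 0 < τ := hs0.trans hτ.1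
  rw [Real.norm_eq_abs, abs_of_nonneg (by positivity)]
  gcongr
  exacts [hτ.1.le, hE τ hτ]

lemma VanishNearBdry.sqrt_integral_sq_integral_conformalMajorant_le
    (h : VanishNearBdry s0 s1 φ) (hφ : ContDiff ℝ 1 φ) (hs0 : 0 < s0) (hs : s ∈ Icc s0 s1) :
    √(∫ x, (∫ τ in Ioo s0 s, conformalMajorant φ τ x) ^ 2)
      ≤ ∫ τ in Ioo s0 s, 3 * (τ⁻¹ * √(Econ τ φ)) := by
  have hIoo : ∀ᵐ τ ∂(volume.restrict (Ioo s0 s)), τ ∈ Ioo s0 s1 :=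
    (ae_restrict_mem measurableSet_Ioo).mono fun τ hτ => ⟨hτ.1, hτ.2.trans_le hs.2⟩
  exact sqrt_integral_sq_integral_le
    (hIoo.mono fun τ hτ x => conformalMajorant_nonneg (hs0.trans hτ.1).le φ x)
    (hIoo.mono fun τ hτ => h.memLp_conformalMajorant hφ hs0 hτ)
    (hIoo.mono fun τ hτ => h.sqrt_integral_conformalMajorant_sq_le hφ hs0 hτ)
    ((h.integrableOn_inv_mul_sqrt_Econ hφ hs0 hs.2).const_mul 3)
    (h.memLp_integral_conformalMajorant hφ hs0 hs)
    (h.integrable_conformalMajorant_mul_integral hφ hs0 hs)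

end Estimate

/-- **`L²` estimate for the undifferentiated wave field via the conformal energy**
(Proposition 4.3, second part). There is a universal constant `C > 0` such that
`‖(s/t)φ‖_{L²_f(H_s)} ≤ C ‖(s₀/t)φ‖_{L²_f(H_{s₀})} + C ∫_{s₀}^s τ^{−1} E_con(τ,φ)^{1/2} dτ`. -/
theorem conformal_L2_estimate :
    ∃ C : ℝ, 0 < C ∧
      ∀ s0 s1 : ℝ, 1 < s0 → s0 ≤ s1 →
      ∀ φ : Pt → ℝ, ContDiff ℝ (⊤ : ℕ∞) φ → VanishNearBdry s0 s1 φ →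
      ∀ s : ℝ, s0 ≤ s → s ≤ s1 →
        L2f s (fun p => (s / p 0) * φ p)
          ≤ C * L2f s0 (fun p => (s0 / p 0) * φ p)
            + C * ∫ τ in s0..s, τ⁻¹ * Real.sqrt (Econ τ φ) := by
  refine ⟨3, by norm_num, fun s0 s1 hs0 hs01 φ hφ hvan s hs0s hss1 => ?_⟩
  have hs0' : 0 < s0 := zero_lt_one.trans hs0
  have hφ1 : ContDiff ℝ 1 φ := hφ.of_le (by exact_mod_cast le_top)
  have ha := hvan.memLp_div_hyp_zero_mul hφ1.continuous hs0' ⟨le_rfl, hs01⟩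
  have hL2 : 0 ≤ L2f s0 (fun p => (s0 / p 0) * φ p) := Real.sqrt_nonneg _
  calc L2f s (fun p => (s / p 0) * φ p)
      ≤ L2f s0 (fun p => (s0 / p 0) * φ p)
        + √(∫ x, (∫ τ in Ioo s0 s, conformalMajorant φ τ x) ^ 2) := by
        simpa only [L2f, sq_abs] using sqrt_integral_sq_le_of_abs_le_add
          (abs_div_hyp_zero_mul_le hφ1 hs0' hs0s) ha.abs
          (hvan.memLp_integral_conformalMajorant hφ1 hs0' ⟨hs0s, hss1⟩)
    _ ≤ L2f s0 (fun p => (s0 / p 0) * φ p) + 3 * ∫ τ in s0..s, τ⁻¹ * Real.sqrt (Econ τ φ) := by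
        rw [intervalIntegral.integral_of_le hs0s, integral_Ioc_eq_integral_Ioo,
          ← integral_const_mul]
        exact add_le_add le_rfl
          (hvan.sqrt_integral_sq_integral_conformalMajorant_le hφ1 hs0' ⟨hs0s, hss1⟩)
    _ ≤ _ := by linarith
end
end

section
/- Null form estimate in the semi-hyperboloidal frame. Let Q be either Q₀ or one of the Q_{μν} (μ, ν ∈ {0,1,2}). For any finite sequences I (indices in {0,1,2}) and J (indices in {1,2}) there exists C > 0 such that for all smooth functions φ, ψ supported in the cone K, at every point of K: |∂^I L^J Q(φ, ψ)| ≤ C (s/t)² Σ |∂^{I₁} L^{J₁} ∂_t φ| · |∂^{I₂} L^{J₂} ∂_t ψ| + C Σ Σ_{a ∈ {1,2}, β ∈ {0,1,2}} ( |∂^{I₁} L^{J₁} ∂̲_a φ| · |∂^{I₂} L^{J₂} ∂̲_β ψ| + |∂^{I₁} L^{J₁} ∂̲_β φ| · |∂^{I₂} L^{J₂} ∂̲_a ψ| ), where both outer sums run over all pairs of sequences with |I₁| + |I₂| ≤ |I| and |J₁| + |J₂| ≤ |J|, and s = √(t² − r²). -/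
noncomputable section

open MeasureTheory

/-- The sum `Σ_{|I₁|+|I₂|≤nI, |J₁|+|J₂|≤mJ} |∂^{I₁}L^{J₁}∂_tφ| · |∂^{I₂}L^{J₂}∂_tψ|`. -/
def nullSum1 (nI mJ : ℕ) (φ ψ : Pt → ℝ) (p : Pt) : ℝ :=
  ∑ n1 ∈ Finset.range (nI + 1), ∑ n2 ∈ Finset.range (nI + 1),
  ∑ m1 ∈ Finset.range (mJ + 1), ∑ m2 ∈ Finset.range (mJ + 1),
    if n1 + n2 ≤ nI ∧ m1 + m2 ≤ mJ then
      ∑ I1 : Fin n1 → Fin 3, ∑ I2 : Fin n2 → Fin 3,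
      ∑ J1 : Fin m1 → Fin 2, ∑ J2 : Fin m2 → Fin 2,
        |pdSeq (List.ofFn I1) (boostSeq (List.ofFn J1) (pd 0 φ)) p| *
          |pdSeq (List.ofFn I2) (boostSeq (List.ofFn J2) (pd 0 ψ)) p|
    else 0

/-- The sum `Σ_{|I₁|+|I₂|≤nI, |J₁|+|J₂|≤mJ} Σ_{a,β} (|∂^{I₁}L^{J₁}∂̲_aφ|·|∂^{I₂}L^{J₂}∂̲_βψ|
+ |∂^{I₁}L^{J₁}∂̲_βφ|·|∂^{I₂}L^{J₂}∂̲_aψ|)`. -/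
def nullSum2 (nI mJ : ℕ) (φ ψ : Pt → ℝ) (p : Pt) : ℝ :=
  ∑ n1 ∈ Finset.range (nI + 1), ∑ n2 ∈ Finset.range (nI + 1),
  ∑ m1 ∈ Finset.range (mJ + 1), ∑ m2 ∈ Finset.range (mJ + 1),
    if n1 + n2 ≤ nI ∧ m1 + m2 ≤ mJ then
      ∑ I1 : Fin n1 → Fin 3, ∑ I2 : Fin n2 → Fin 3,
      ∑ J1 : Fin m1 → Fin 2, ∑ J2 : Fin m2 → Fin 2,
      ∑ a : Fin 2, ∑ β : Fin 3,
        (|pdSeq (List.ofFn I1) (boostSeq (List.ofFn J1) (ubd a φ)) p| *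
            |pdSeq (List.ofFn I2) (boostSeq (List.ofFn J2) (ubar β ψ)) p|
          + |pdSeq (List.ofFn I1) (boostSeq (List.ofFn J1) (ubar β φ)) p| *
            |pdSeq (List.ofFn I2) (boostSeq (List.ofFn J2) (ubd a ψ)) p|)
    else 0

open Set Filter Asymptotics
open scoped ContDiff

/-!
Write `∂_a = ∂̲_a - (x^a / t) ∂_t`. In the frame `(∂_t, ∂̲_1, ∂̲_2)` a constant-coefficient form
`Q(φ, ψ) = A^{μν} ∂_μ φ ∂_ν ψ` becomes `Σ q_{βγ} ∂̲_β φ ∂̲_γ ψ`, with coefficients in the algebra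
generated by `x^a / t` and `1 / t`; every term except `q_{00} ∂_t φ ∂_t ψ` contains a good
derivative `∂̲_a`, and the null condition makes `q_{00} = A_{00} (s / t)²`. Applying `∂^I L^J` and the Leibniz
rule distributes the vector fields over the coefficient and the two factors. A coordinate
derivative of a coefficient gains a factor `1 / t` and a boost keeps it in the algebra, so all
derivatives of the coefficients are bounded in `K`, while those of `(s / t)²` are
`O(1 / t + (s / t)²) = O((s / t)²)` there, because `s² ≥ t` in `K`.
-/

namespace NullForm

/-! ## Derivations on the half-space `t > 0` -/

def posTime : Set Pt := {p | 0 < p 0}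

lemma isOpen_posTime : IsOpen posTime := isOpen_lt continuous_const (continuous_apply 0)

lemma ne_zero_of_mem_posTime {p : Pt} (hp : p ∈ posTime) : p 0 ≠ 0 := ne_of_gt hp

lemma one_lt_of_mem_coneK {p : Pt} (hp : p ∈ coneK) : 1 < p 0 := by
  have h : rad p < p 0 - 1 := hp
  have : 0 ≤ rad p := Real.sqrt_nonneg _
  linarith

lemma abs_lt_of_mem_coneK {p : Pt} (hp : p ∈ coneK) (a : Fin 2) : |p a.succ| < p 0 - 1 := by
  refine lt_of_le_of_lt ?_ hp
  rw [← Real.sqrt_sq_eq_abs]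
  apply Real.sqrt_le_sqrt
  fin_cases a
  · exact le_add_of_nonneg_right (sq_nonneg _)
  · exact le_add_of_nonneg_left (sq_nonneg _)

lemma coneK_subset_posTime : coneK ⊆ posTime := fun _ hp =>
  zero_lt_one.trans (one_lt_of_mem_coneK hp)

def smoothPosTime : Subalgebra ℝ (Pt → ℝ) where
  carrier := {f | ContDiffOn ℝ ∞ f posTime}
  mul_mem' := ContDiffOn.mul
  add_mem' := ContDiffOn.add
  algebraMap_mem' _ := contDiffOn_const

lemma coord_mem_smoothPosTime (j : Fin 3) : (fun p : Pt => p j) ∈ smoothPosTime :=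
  (contDiff_apply ℝ ℝ j).contDiffOn

lemma differentiableAt_of_mem_smoothPosTime {f : Pt → ℝ} (hf : f ∈ smoothPosTime) {p : Pt}
    (hp : p ∈ posTime) : DifferentiableAt ℝ f p :=
  (ContDiffOn.differentiableOn hf (by simp)).differentiableAt (isOpen_posTime.mem_nhds hp)

lemma list_sum_mem_smoothPosTime {ι : Type*} (L : List ι) {F : ι → Pt → ℝ}
    (hF : ∀ i ∈ L, F i ∈ smoothPosTime) :
    (fun p => (L.map fun i => F i p).sum) ∈ smoothPosTime := by
  induction L with
  | nil => exact zero_mem _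
  | cons i L ih =>
    exact add_mem (hF i List.mem_cons_self) (ih fun j hj => hF j (List.mem_cons_of_mem _ hj))

-- Identities are only required on `t > 0`, where the frame coefficients `x^a / t` are smooth.
structure IsDerivationOn (D : (Pt → ℝ) → Pt → ℝ) : Prop where
  congr {f g : Pt → ℝ} : EqOn f g posTime → EqOn (D f) (D g) posTime
  const (r : ℝ) ⦃p : Pt⦄ : p ∈ posTime → D (fun _ => r) p = 0
  add {f g : Pt → ℝ} : f ∈ smoothPosTime → g ∈ smoothPosTime → ∀ ⦃p : Pt⦄, p ∈ posTime →
    D (fun q => f q + g q) p = D f p + D g p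
  mul {f g : Pt → ℝ} : f ∈ smoothPosTime → g ∈ smoothPosTime → ∀ ⦃p : Pt⦄, p ∈ posTime →
    D (fun q => f q * g q) p = D f p * g p + f p * D g p
  smooth {f : Pt → ℝ} : f ∈ smoothPosTime → D f ∈ smoothPosTime

lemma isDerivationOn_pd (i : Fin 3) : IsDerivationOn (pd i) where
  congr h _ hp := by
    simp only [pd, (h.eventuallyEq_of_mem (isOpen_posTime.mem_nhds hp)).fderiv_eq]
  const r _ _ := by simp [pd]
  add hf hg _ hp := by
    simp [pd, fderiv_fun_add (differentiableAt_of_mem_smoothPosTime hf hp)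
      (differentiableAt_of_mem_smoothPosTime hg hp)]
  mul hf hg _ hp := by
    simp only [pd, fderiv_fun_mul (differentiableAt_of_mem_smoothPosTime hf hp)
      (differentiableAt_of_mem_smoothPosTime hg hp), add_apply,
      smul_apply, smul_eq_mul]
    ring
  smooth hf := (ContinuousLinearMap.apply ℝ ℝ (Pi.single i 1 : Pt)).contDiff.comp_contDiffOn
    (ContDiffOn.fderiv_of_isOpen hf isOpen_posTime (by simp))

lemma pd_coord (i j : Fin 3) (p : Pt) : pd i (fun q => q j) p = if j = i then 1 else 0 := by
  simp [pd, fderiv_apply, Pi.single_apply]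

namespace IsDerivationOn

variable {D : (Pt → ℝ) → Pt → ℝ}

lemma linComb {D₁ D₂ : (Pt → ℝ) → Pt → ℝ} (h₁ : IsDerivationOn D₁) (h₂ : IsDerivationOn D₂)
    {g₁ g₂ : Pt → ℝ} (hg₁ : g₁ ∈ smoothPosTime) (hg₂ : g₂ ∈ smoothPosTime) :
    IsDerivationOn fun f p => g₁ p * D₁ f p + g₂ p * D₂ f p where
  congr h _ hp := by simp [h₁.congr h hp, h₂.congr h hp]
  const r _ hp := by simp [h₁.const r hp, h₂.const r hp]
  add hf hg _ hp := by simp only [h₁.add hf hg hp, h₂.add hf hg hp]; ring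
  mul hf hg _ hp := by simp only [h₁.mul hf hg hp, h₂.mul hf hg hp]; ring
  smooth hf := add_mem (mul_mem hg₁ (h₁.smooth hf)) (mul_mem hg₂ (h₂.smooth hf))

lemma map_list_sum (hD : IsDerivationOn D) {ι : Type*} (L : List ι) {F : ι → Pt → ℝ}
    (hF : ∀ i ∈ L, F i ∈ smoothPosTime) :
    ∀ ⦃p : Pt⦄, p ∈ posTime →
      D (fun q => (L.map fun i => F i q).sum) p = (L.map fun i => D (F i) p).sum := by
  induction L with
  | nil => exact hD.const 0
  | cons i L ih =>
    intro p hp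
    have hL : ∀ j ∈ L, F j ∈ smoothPosTime := fun j hj => hF j (List.mem_cons_of_mem _ hj)
    simp only [List.map_cons, List.sum_cons]
    rw [hD.add (hF i List.mem_cons_self) (list_sum_mem_smoothPosTime L hL) hp, ih hL hp]

lemma sub (hD : IsDerivationOn D) {f g : Pt → ℝ}
    (hf : f ∈ smoothPosTime) (hg : g ∈ smoothPosTime) :
    ∀ ⦃p : Pt⦄, p ∈ posTime → D (fun q => f q - g q) p = D f p - D g p := by
  intro p hp
  have h := hD.add (f := fun q => f q - g q) (sub_mem hf hg) hg hp
  simp only [sub_add_cancel] at h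
  simp only [h]
  ring

lemma sq (hD : IsDerivationOn D) {f : Pt → ℝ} (hf : f ∈ smoothPosTime) :
    ∀ ⦃p : Pt⦄, p ∈ posTime → D (fun q => f q ^ 2) p = 2 * f p * D f p := by
  intro p hp
  simp only [pow_two, hD.mul hf hf hp]
  ring

end IsDerivationOn

-- All ways of distributing the entries of a list over two sublists, keeping their order.
def splits {α : Type*} : List α → List (List α × List α)
  | [] => [([], [])]
  | x :: l => (splits l).map (fun s => (x :: s.1, s.2)) ++ (splits l).map (fun s => (s.1, x :: s.2))

lemma length_add_length_of_mem_splits {α : Type*} {l : List α} {s : List α × List α}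
    (hs : s ∈ splits l) : s.1.length + s.2.length = l.length := by
  induction l generalizing s with
  | nil => simp_all [splits]
  | cons x l ih =>
    simp only [splits, List.mem_append, List.mem_map] at hs
    rcases hs with ⟨t, ht, rfl⟩ | ⟨t, ht, rfl⟩ <;> simp only [List.length_cons, ← ih ht] <;> omega

section Iterated

variable {ι : Type*} {D : ι → (Pt → ℝ) → Pt → ℝ}

lemma foldr_mem_smoothPosTime (hD : ∀ i, IsDerivationOn (D i)) (l : List ι) {f : Pt → ℝ}
    (hf : f ∈ smoothPosTime) : l.foldr D f ∈ smoothPosTime := by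
  induction l with
  | nil => exact hf
  | cons i l ih => exact (hD i).smooth ih

lemma eqOn_foldr (hD : ∀ i, IsDerivationOn (D i)) (l : List ι) {f g : Pt → ℝ}
    (h : EqOn f g posTime) : EqOn (l.foldr D f) (l.foldr D g) posTime := by
  induction l with
  | nil => exact h
  | cons i l ih => exact (hD i).congr ih

lemma foldr_list_sum (hD : ∀ i, IsDerivationOn (D i)) (l : List ι) {κ : Type*} (L : List κ)
    {F : κ → Pt → ℝ} (hF : ∀ k ∈ L, F k ∈ smoothPosTime) :
    ∀ ⦃p : Pt⦄, p ∈ posTime →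
      l.foldr D (fun q => (L.map fun k => F k q).sum) p
        = (L.map fun k => l.foldr D (F k) p).sum := by
  induction l with
  | nil => exact fun _ _ => rfl
  | cons i l ih =>
    exact fun p hp => ((hD i).congr ih hp).trans ((hD i).map_list_sum L (fun k _ =>
      foldr_mem_smoothPosTime hD l (hF k ‹_›)) hp)

lemma foldr_mul (hD : ∀ i, IsDerivationOn (D i)) (l : List ι) {f g : Pt → ℝ}
    (hf : f ∈ smoothPosTime) (hg : g ∈ smoothPosTime) :
    ∀ ⦃p : Pt⦄, p ∈ posTime → l.foldr D (fun q => f q * g q) p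
      = ((splits l).map fun s => s.1.foldr D f p * s.2.foldr D g p).sum := by
  induction l with
  | nil => intro p _; simp [splits]
  | cons i l ih =>
    have hsmooth : ∀ s ∈ splits l, (fun p => s.1.foldr D f p * s.2.foldr D g p) ∈ smoothPosTime :=
      fun s _ => mul_mem (foldr_mem_smoothPosTime hD _ hf) (foldr_mem_smoothPosTime hD _ hg)
    intro p hp
    rw [List.foldr_cons, (hD i).congr ih hp, (hD i).map_list_sum _ hsmooth hp]
    rw [List.map_congr_left fun (s : List ι × List ι) _ => (hD i).mul
      (foldr_mem_smoothPosTime hD s.1 hf) (foldr_mem_smoothPosTime hD s.2 hg) hp]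
    simp [splits, List.sum_map_add, Function.comp_def]

end Iterated

lemma isDerivationOn_boost (a : Fin 2) : IsDerivationOn (boost a) :=
  (isDerivationOn_pd 0).linComb (isDerivationOn_pd a.succ) (coord_mem_smoothPosTime a.succ)
    (coord_mem_smoothPosTime 0)

lemma pdSeq_eq_foldr (I : List (Fin 3)) (f : Pt → ℝ) : pdSeq I f = I.foldr pd f := by
  induction I with
  | nil => rfl
  | cons i I ih => simp [pdSeq, ih]

lemma boostSeq_eq_foldr (J : List (Fin 2)) (f : Pt → ℝ) : boostSeq J f = J.foldr boost f := by
  induction J with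
  | nil => rfl
  | cons a J ih => simp [boostSeq, ih]

lemma pdSeq_boostSeq_list_sum (I : List (Fin 3)) (J : List (Fin 2)) {κ : Type*} (L : List κ)
    {F : κ → Pt → ℝ} (hF : ∀ k ∈ L, F k ∈ smoothPosTime) ⦃p : Pt⦄ (hp : p ∈ posTime) :
    pdSeq I (boostSeq J fun q => (L.map fun k => F k q).sum) p
      = (L.map fun k => pdSeq I (boostSeq J (F k)) p).sum := by
  simp only [pdSeq_eq_foldr, boostSeq_eq_foldr]
  rw [eqOn_foldr isDerivationOn_pd I (foldr_list_sum isDerivationOn_boost J L hF) hp,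
    foldr_list_sum isDerivationOn_pd I L
      (fun k hk => foldr_mem_smoothPosTime isDerivationOn_boost J (hF k hk)) hp]

lemma pdSeq_boostSeq_finset_sum (I : List (Fin 3)) (J : List (Fin 2)) {κ : Type*} (s : Finset κ)
    {F : κ → Pt → ℝ} (hF : ∀ k ∈ s, F k ∈ smoothPosTime) ⦃p : Pt⦄ (hp : p ∈ posTime) :
    pdSeq I (boostSeq J fun q => ∑ k ∈ s, F k q) p = ∑ k ∈ s, pdSeq I (boostSeq J (F k)) p := by
  simp only [← Finset.sum_map_toList s]
  exact pdSeq_boostSeq_list_sum I J s.toList (fun k hk => hF k (Finset.mem_toList.1 hk)) hp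

lemma pdSeq_boostSeq_mul (I : List (Fin 3)) (J : List (Fin 2)) {f g : Pt → ℝ}
    (hf : f ∈ smoothPosTime) (hg : g ∈ smoothPosTime) :
    ∀ ⦃p : Pt⦄, p ∈ posTime → pdSeq I (boostSeq J fun q => f q * g q) p
      = ((splits J).map fun sJ => ((splits I).map fun sI =>
        pdSeq sI.1 (boostSeq sJ.1 f) p * pdSeq sI.2 (boostSeq sJ.2 g) p).sum).sum := by
  simp only [pdSeq_eq_foldr, boostSeq_eq_foldr]
  intro p hp
  have hmul : ∀ s ∈ splits J,
      (fun q => s.1.foldr boost f q * s.2.foldr boost g q) ∈ smoothPosTime := fun s _ => mul_mem (foldr_mem_smoothPosTime isDerivationOn_boost _ hf)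
      (foldr_mem_smoothPosTime isDerivationOn_boost _ hg)
  rw [eqOn_foldr isDerivationOn_pd I (foldr_mul isDerivationOn_boost J hf hg) hp,
    foldr_list_sum isDerivationOn_pd I (splits J) hmul hp]
  refine congrArg List.sum (List.map_congr_left fun s _ => ?_)
  exact foldr_mul isDerivationOn_pd I (foldr_mem_smoothPosTime isDerivationOn_boost _ hf)
    (foldr_mem_smoothPosTime isDerivationOn_boost _ hg) hp

/-! ## Majorants and the Leibniz estimate -/

def pairSum (n m : ℕ) (F G : Pt → ℝ) (p : Pt) : ℝ :=
  ∑ n1 ∈ Finset.range (n + 1), ∑ n2 ∈ Finset.range (n + 1),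
  ∑ m1 ∈ Finset.range (m + 1), ∑ m2 ∈ Finset.range (m + 1),
    if n1 + n2 ≤ n ∧ m1 + m2 ≤ m then
      ∑ I1 : Fin n1 → Fin 3, ∑ I2 : Fin n2 → Fin 3,
      ∑ J1 : Fin m1 → Fin 2, ∑ J2 : Fin m2 → Fin 2,
        |pdSeq (List.ofFn I1) (boostSeq (List.ofFn J1) F) p| *
          |pdSeq (List.ofFn I2) (boostSeq (List.ofFn J2) G) p|
    else 0

lemma pairSum_nonneg (n m : ℕ) (F G : Pt → ℝ) (p : Pt) : 0 ≤ pairSum n m F G p := by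
  unfold pairSum; positivity

lemma le_sum_of_le_of_mem {ι : Type*} {s : Finset ι} {f : ι → ℝ} {a : ℝ} {i : ι} (hi : i ∈ s)
    (hf : ∀ j ∈ s, 0 ≤ f j) (h : a ≤ f i) : a ≤ ∑ j ∈ s, f j :=
  h.trans (Finset.single_le_sum hf hi)

lemma mul_le_pairSum {n m : ℕ} (F G : Pt → ℝ) (p : Pt) {I₁ I₂ : List (Fin 3)}
    {J₁ J₂ : List (Fin 2)} (hI : I₁.length + I₂.length ≤ n) (hJ : J₁.length + J₂.length ≤ m) :
    |pdSeq I₁ (boostSeq J₁ F) p| * |pdSeq I₂ (boostSeq J₂ G) p| ≤ pairSum n m F G p := by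
  unfold pairSum
  refine le_sum_of_le_of_mem (Finset.mem_range.2 (by omega : I₁.length < n + 1))
    (fun _ _ => by positivity) ?_
  refine le_sum_of_le_of_mem (Finset.mem_range.2 (by omega : I₂.length < n + 1))
    (fun _ _ => by positivity) ?_
  refine le_sum_of_le_of_mem (Finset.mem_range.2 (by omega : J₁.length < m + 1))
    (fun _ _ => by positivity) ?_
  refine le_sum_of_le_of_mem (Finset.mem_range.2 (by omega : J₂.length < m + 1))
    (fun _ _ => by positivity) ?_
  rw [if_pos ⟨hI, hJ⟩]
  refine le_sum_of_le_of_mem (Finset.mem_univ I₁.get) (fun _ _ => by positivity) ?_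
  refine le_sum_of_le_of_mem (Finset.mem_univ I₂.get) (fun _ _ => by positivity) ?_
  refine le_sum_of_le_of_mem (Finset.mem_univ J₁.get) (fun _ _ => by positivity) ?_
  refine le_sum_of_le_of_mem (Finset.mem_univ J₂.get) (fun _ _ => by positivity) ?_
  simp only [List.ofFn_get, le_refl]

lemma pairSum_ubd_ubar_le_nullSum2 (n m : ℕ) (φ ψ : Pt → ℝ) (p : Pt) (a : Fin 2) (β : Fin 3) :
    pairSum n m (ubd a φ) (ubar β ψ) p ≤ nullSum2 n m φ ψ p := by
  unfold pairSum nullSum2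
  gcongr with n1 _ n2 _ m1 _ m2 _
  split_ifs
  · gcongr with I1 _ I2 _ J1 _ J2 _
    refine le_sum_of_le_of_mem (Finset.mem_univ a) (fun _ _ => by positivity) ?_
    refine le_sum_of_le_of_mem (Finset.mem_univ β) (fun _ _ => by positivity) ?_
    exact le_add_of_nonneg_right (by positivity)
  · exact le_rfl

lemma pairSum_ubar_ubd_le_nullSum2 (n m : ℕ) (φ ψ : Pt → ℝ) (p : Pt) (a : Fin 2) (β : Fin 3) :
    pairSum n m (ubar β φ) (ubd a ψ) p ≤ nullSum2 n m φ ψ p := by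
  unfold pairSum nullSum2
  gcongr with n1 _ n2 _ m1 _ m2 _
  split_ifs
  · gcongr with I1 _ I2 _ J1 _ J2 _
    refine le_sum_of_le_of_mem (Finset.mem_univ a) (fun _ _ => by positivity) ?_
    refine le_sum_of_le_of_mem (Finset.mem_univ β) (fun _ _ => by positivity) ?_
    exact le_add_of_nonneg_left (by positivity)
  · exact le_rfl

lemma nullSum1_eq_pairSum (n m : ℕ) (φ ψ : Pt → ℝ) :
    nullSum1 n m φ ψ = pairSum n m (pd 0 φ) (pd 0 ψ) := rfl

lemma nullSum2_nonneg (n m : ℕ) (φ ψ : Pt → ℝ) (p : Pt) : 0 ≤ nullSum2 n m φ ψ p :=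
  (pairSum_nonneg ..).trans (pairSum_ubd_ubar_le_nullSum2 n m φ ψ p 0 0)

lemma pdSeq_boostSeq_mul_mul (I : List (Fin 3)) (J : List (Fin 2)) {c F G : Pt → ℝ}
    (hc : c ∈ smoothPosTime) (hF : F ∈ smoothPosTime) (hG : G ∈ smoothPosTime) :
    ∀ ⦃p : Pt⦄, p ∈ posTime → pdSeq I (boostSeq J fun q => c q * F q * G q) p
      = ((splits J).map fun sJ => ((splits I).map fun sI =>
        (((splits sJ.1).map fun tJ => ((splits sI.1).map fun tI =>
          pdSeq tI.1 (boostSeq tJ.1 c) p * pdSeq tI.2 (boostSeq tJ.2 F) p).sum).sum) *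
        pdSeq sI.2 (boostSeq sJ.2 G) p).sum).sum := by
  intro p hp
  rw [pdSeq_boostSeq_mul I J (f := fun q => c q * F q) (mul_mem hc hF) hG hp]
  refine congrArg List.sum (List.map_congr_left fun sJ _ => ?_)
  refine congrArg List.sum (List.map_congr_left fun sI _ => ?_)
  rw [pdSeq_boostSeq_mul sI.1 sJ.1 hc hF hp]

lemma IsBigO.list_sum {α ι : Type*} {l : Filter α} {L : List ι} {A : ι → α → ℝ} {g : α → ℝ}
    (h : ∀ i ∈ L, A i =O[l] g) : (fun x => (L.map fun i => A i x).sum) =O[l] g := by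
  induction L with
  | nil => simpa using isBigO_zero g l
  | cons i L ih =>
    simpa using (h i List.mem_cons_self).add (ih fun j hj => h j (List.mem_cons_of_mem _ hj))

theorem isBigO_pdSeq_boostSeq_mul_mul {X : Type*} {S : Set X} {P : X → Pt}
    (hP : ∀ x ∈ S, P x ∈ coneK) {F G : X → Pt → ℝ}
    (hF : ∀ x ∈ S, F x ∈ smoothPosTime) (hG : ∀ x ∈ S, G x ∈ smoothPosTime)
    {c ρ : Pt → ℝ} (hcs : c ∈ smoothPosTime)
    (hc : ∀ I J, pdSeq I (boostSeq J c) =O[𝓟 coneK] ρ) (I : List (Fin 3)) (J : List (Fin 2)) :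
    (fun x => pdSeq I (boostSeq J fun p => c p * F x p * G x p) (P x)) =O[𝓟 S]
      fun x => ρ (P x) * pairSum I.length J.length (F x) (G x) (P x) := by
  refine IsBigO.congr' ?_ (eventually_principal.2 fun x hx =>
    (pdSeq_boostSeq_mul_mul I J hcs (hF x hx) (hG x hx) (coneK_subset_posTime (hP x hx))).symm)
    EventuallyEq.rfl
  refine IsBigO.list_sum fun sJ hsJ => IsBigO.list_sum fun sI hsI => ?_
  simp only [← List.sum_map_mul_right]
  refine IsBigO.list_sum fun tJ htJ => IsBigO.list_sum fun tI htI => ?_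
  simp only [mul_assoc]
  refine ((hc tI.1 tJ.1).comp_tendsto (tendsto_principal_principal.2 hP)).mul
    (IsBigO.of_bound 1 (eventually_principal.2 fun x _ => ?_))
  have := length_add_length_of_mem_splits hsI
  have := length_add_length_of_mem_splits hsJ
  have := length_add_length_of_mem_splits htI
  have := length_add_length_of_mem_splits htJ
  rw [Real.norm_eq_abs, Real.norm_eq_abs, abs_mul, one_mul, abs_of_nonneg (pairSum_nonneg ..)]
  exact mul_le_pairSum _ _ _ (by omega) (by omega)

/-! ## The coefficient algebra -/

def slope (a : Fin 2) : Pt → ℝ := fun p => p a.succ / p 0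

def invTime : Pt → ℝ := fun p => (p 0)⁻¹

def coefAlg : Subalgebra ℝ (Pt → ℝ) := Algebra.adjoin ℝ (insert invTime (Set.range slope))

lemma invTime_mem_coefAlg : invTime ∈ coefAlg := Algebra.subset_adjoin (Set.mem_insert _ _)

lemma slope_mem_coefAlg (a : Fin 2) : slope a ∈ coefAlg :=
  Algebra.subset_adjoin (Set.mem_insert_of_mem _ ⟨a, rfl⟩)

lemma const_mem_coefAlg (r : ℝ) : (fun _ => r) ∈ coefAlg := Subalgebra.algebraMap_mem _ r

lemma coefAlg_le_smoothPosTime : coefAlg ≤ smoothPosTime := by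
  refine Algebra.adjoin_le ?_
  rintro _ (rfl | ⟨a, rfl⟩)
  · exact (coord_mem_smoothPosTime 0).inv fun _ => ne_zero_of_mem_posTime
  · exact (coord_mem_smoothPosTime a.succ).div (coord_mem_smoothPosTime 0) fun _ =>
      ne_zero_of_mem_posTime

lemma abs_invTime_le_one {p : Pt} (hp : p ∈ coneK) : |invTime p| ≤ 1 := by
  have h := one_lt_of_mem_coneK hp
  rw [invTime, abs_inv, abs_of_pos (by linarith)]
  exact inv_le_one_of_one_le₀ h.le

lemma abs_slope_le_one {p : Pt} (hp : p ∈ coneK) (a : Fin 2) : |slope a p| ≤ 1 := by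
  have h := one_lt_of_mem_coneK hp
  rw [slope, abs_div, abs_of_pos (by linarith : (0 : ℝ) < p 0), div_le_one (by linarith)]
  linarith [abs_lt_of_mem_coneK hp a]

lemma isBigO_one_of_mem_coefAlg {c : Pt → ℝ} (hc : c ∈ coefAlg) :
    c =O[𝓟 coneK] fun _ => (1 : ℝ) := by
  induction hc using Algebra.adjoin_induction with
  | mem x hx =>
    refine IsBigO.of_bound 1 (eventually_principal.2 fun p hp => ?_)
    rcases hx with rfl | ⟨a, rfl⟩
    · simpa using abs_invTime_le_one hp
    · simpa using abs_slope_le_one hp a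
  | algebraMap r => exact isBigO_const_const r one_ne_zero _
  | add x y _ _ hx hy => exact hx.add hy
  | mul x y _ _ hx hy => simpa using hx.mul hy

lemma pd_slope (i : Fin 3) (a : Fin 2) {p : Pt} (hp : p ∈ posTime) :
    pd i (slope a) p = invTime p *
      ((if a.succ = i then 1 else 0) - slope a p * (if (0 : Fin 3) = i then 1 else 0)) := by
  have hp0 := ne_zero_of_mem_posTime hp
  have key := (isDerivationOn_pd i).congr (f := fun q => q a.succ) (g := fun q => slope a q * q 0)
    (fun q hq => by simp [slope, ne_zero_of_mem_posTime hq]) hp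
  rw [(isDerivationOn_pd i).mul (coefAlg_le_smoothPosTime (slope_mem_coefAlg a))
    (coord_mem_smoothPosTime 0) hp] at key
  simp only [pd_coord] at key
  simp only [invTime, slope] at key ⊢
  rw [eq_inv_mul_iff_mul_eq₀ hp0]
  linarith

lemma pd_invTime (i : Fin 3) {p : Pt} (hp : p ∈ posTime) :
    pd i invTime p = invTime p * (-invTime p * (if (0 : Fin 3) = i then 1 else 0)) := by
  have hp0 := ne_zero_of_mem_posTime hp
  have key := (isDerivationOn_pd i).congr (f := fun _ => 1) (g := fun q => invTime q * q 0)
    (fun q hq => by simp [invTime, ne_zero_of_mem_posTime hq]) hp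
  rw [(isDerivationOn_pd i).mul (coefAlg_le_smoothPosTime invTime_mem_coefAlg)
    (coord_mem_smoothPosTime 0) hp, (isDerivationOn_pd i).const 1 hp] at key
  simp only [pd_coord] at key
  simp only [invTime] at key ⊢
  rw [eq_inv_mul_iff_mul_eq₀ hp0]
  linarith

lemma exists_pd_eq_invTime_mul {c : Pt → ℝ} (hc : c ∈ coefAlg) (i : Fin 3) :
    ∃ c' ∈ coefAlg, EqOn (pd i c) (fun p => invTime p * c' p) posTime := by
  have hpd := isDerivationOn_pd i
  induction hc using Algebra.adjoin_induction with
  | mem x hx =>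
    rcases hx with rfl | ⟨a, rfl⟩
    · exact ⟨fun p => -invTime p * (if (0 : Fin 3) = i then 1 else 0),
        mul_mem (neg_mem invTime_mem_coefAlg) (const_mem_coefAlg _), fun p hp => pd_invTime i hp⟩
    · exact ⟨fun p =>
          (if a.succ = i then 1 else 0) - slope a p * (if (0 : Fin 3) = i then 1 else 0),
        sub_mem (const_mem_coefAlg _) (mul_mem (slope_mem_coefAlg a) (const_mem_coefAlg _)),
        fun p hp => pd_slope i a hp⟩
  | algebraMap r => exact ⟨0, zero_mem _, fun p hp => (hpd.const r hp).trans (by simp)⟩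
  | add x y hx hy ihx ihy =>
    obtain ⟨c₁, hc₁, h₁⟩ := ihx
    obtain ⟨c₂, hc₂, h₂⟩ := ihy
    refine ⟨c₁ + c₂, add_mem hc₁ hc₂, fun p hp => ?_⟩
    refine (hpd.add (coefAlg_le_smoothPosTime hx) (coefAlg_le_smoothPosTime hy) hp :
      pd i (x + y) p = _).trans ?_
    simp only [h₁ hp, h₂ hp, Pi.add_apply]
    ring
  | mul x y hx hy ihx ihy =>
    obtain ⟨c₁, hc₁, h₁⟩ := ihx
    obtain ⟨c₂, hc₂, h₂⟩ := ihy
    refine ⟨c₁ * y + x * c₂, add_mem (mul_mem hc₁ hy) (mul_mem hx hc₂), fun p hp => ?_⟩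
    refine (hpd.mul (coefAlg_le_smoothPosTime hx) (coefAlg_le_smoothPosTime hy) hp :
      pd i (x * y) p = _).trans ?_
    simp only [h₁ hp, h₂ hp, Pi.add_apply, Pi.mul_apply]
    ring

lemma exists_boost_eq {c : Pt → ℝ} (hc : c ∈ coefAlg) (a : Fin 2) :
    ∃ c' ∈ coefAlg, EqOn (boost a c) c' posTime := by
  obtain ⟨c₀, hc₀, h₀⟩ := exists_pd_eq_invTime_mul hc 0
  obtain ⟨c₁, hc₁, h₁⟩ := exists_pd_eq_invTime_mul hc a.succ
  refine ⟨slope a * c₀ + c₁, add_mem (mul_mem (slope_mem_coefAlg a) hc₀) hc₁, fun p hp => ?_⟩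
  have hp0 := ne_zero_of_mem_posTime hp
  simp only [boost, h₀ hp, h₁ hp, Pi.add_apply, Pi.mul_apply, slope, invTime]
  field_simp

lemma exists_pdSeq_boostSeq_eq {c : Pt → ℝ} (hc : c ∈ coefAlg) (I : List (Fin 3))
    (J : List (Fin 2)) : ∃ c' ∈ coefAlg, EqOn (pdSeq I (boostSeq J c)) c' posTime := by
  induction I with
  | nil =>
    induction J with
    | nil => exact ⟨c, hc, fun _ _ => rfl⟩
    | cons a J ih =>
      obtain ⟨c', hc', h⟩ := ih
      obtain ⟨c'', hc'', h'⟩ := exists_boost_eq hc' a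
      exact ⟨c'', hc'', ((isDerivationOn_boost a).congr h).trans h'⟩
  | cons i I ih =>
    obtain ⟨c', hc', h⟩ := ih
    obtain ⟨c'', hc'', h'⟩ := exists_pd_eq_invTime_mul hc' i
    exact ⟨_, mul_mem invTime_mem_coefAlg hc'', ((isDerivationOn_pd i).congr h).trans h'⟩

lemma isBigO_pdSeq_boostSeq_of_mem_coefAlg {c : Pt → ℝ} (hc : c ∈ coefAlg) (I : List (Fin 3))
    (J : List (Fin 2)) : pdSeq I (boostSeq J c) =O[𝓟 coneK] fun _ => (1 : ℝ) := by
  obtain ⟨c', hc', h⟩ := exists_pdSeq_boostSeq_eq hc I J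
  exact (isBigO_one_of_mem_coefAlg hc').congr'
    (eventually_principal.2 fun p hp => (h (coneK_subset_posTime hp)).symm) EventuallyEq.rfl

/-! ## The weight `(s / t)²` -/

-- `(s / t)² = 1 - |x|² / t²`.
def hypWeight : Pt → ℝ := fun p => 1 - slope 0 p ^ 2 - slope 1 p ^ 2

lemma hypWeight_mem_coefAlg : hypWeight ∈ coefAlg :=
  sub_mem (sub_mem (one_mem _) (pow_mem (slope_mem_coefAlg 0) 2)) (pow_mem (slope_mem_coefAlg 1) 2)

lemma boost_slope (a b : Fin 2) {p : Pt} (hp : p ∈ posTime) :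
    boost a (slope b) p = (if b = a then 1 else 0) - slope a p * slope b p := by
  have hp0 := ne_zero_of_mem_posTime hp
  simp only [boost, pd_slope _ _ hp, invTime, slope, Fin.succ_inj, Fin.succ_ne_zero,
    (Fin.succ_ne_zero _).symm, if_false, if_true]
  split_ifs <;> field_simp <;> ring

lemma boost_invTime (a : Fin 2) {p : Pt} (hp : p ∈ posTime) :
    boost a invTime p = -(slope a p * invTime p) := by
  have hp0 := ne_zero_of_mem_posTime hp
  simp only [boost, pd_invTime _ hp, invTime, slope, (Fin.succ_ne_zero _).symm, if_false, if_true,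
    mul_zero]
  field_simp
  ring

lemma boost_hypWeight (a : Fin 2) {p : Pt} (hp : p ∈ posTime) :
    boost a hypWeight p = -(2 * slope a p * hypWeight p) := by
  have hD := isDerivationOn_boost a
  have hs : ∀ b, slope b ∈ smoothPosTime := fun b => coefAlg_le_smoothPosTime (slope_mem_coefAlg b)
  have hsq : ∀ b, (fun p => slope b p ^ 2) ∈ smoothPosTime := fun b => pow_mem (hs b) 2
  have h1 : (fun p => 1 - slope 0 p ^ 2) ∈ smoothPosTime := sub_mem (one_mem _) (hsq 0)
  show boost a (fun p => 1 - slope 0 p ^ 2 - slope 1 p ^ 2) p = -(2 * slope a p * hypWeight p)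
  rw [hD.sub h1 (hsq 1) hp, hD.sub (f := fun _ => 1) (one_mem _) (hsq 0) hp,
    hD.const 1 hp, hD.sq (hs 0) hp, hD.sq (hs 1) hp, boost_slope _ _ hp, boost_slope _ _ hp]
  fin_cases a <;> simp only [Fin.zero_eta, Fin.mk_one, zero_ne_one, one_ne_zero, if_true, if_false,
    hypWeight] <;> ring

lemma invTime_le_hypWeight {p : Pt} (hp : p ∈ coneK) : invTime p ≤ hypWeight p := by
  have ht := one_lt_of_mem_coneK hp
  have hr : rad p < p 0 - 1 := hp
  have hr2 : (p 1) ^ 2 + (p 2) ^ 2 < (p 0 - 1) ^ 2 := by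
    rw [← Real.sqrt_lt_sqrt_iff (by positivity), Real.sqrt_sq (by linarith)]
    exact hr
  simp only [invTime, hypWeight, slope, div_pow]
  rw [inv_eq_one_div, div_le_iff₀ (by linarith)]
  field_simp
  simp only [Fin.succ_zero_eq_one, Fin.succ_one_eq_two]
  nlinarith

lemma hypWeight_nonneg {p : Pt} (hp : p ∈ coneK) : 0 ≤ hypWeight p :=
  (inv_nonneg.2 (by linarith [one_lt_of_mem_coneK hp])).trans (invTime_le_hypWeight hp)

def IsWeightedCoef (c : Pt → ℝ) : Prop :=
  ∃ c₁ ∈ coefAlg, ∃ c₂ ∈ coefAlg,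
    EqOn c (fun p => invTime p * c₁ p + hypWeight p * c₂ p) posTime

namespace IsWeightedCoef

variable {c : Pt → ℝ}

lemma pd (hc : IsWeightedCoef c) (i : Fin 3) : IsWeightedCoef (pd i c) := by
  obtain ⟨c₁, hc₁, c₂, hc₂, h⟩ := hc
  obtain ⟨c', hc', h'⟩ := exists_pd_eq_invTime_mul
    (c := fun p => invTime p * c₁ p + hypWeight p * c₂ p)
    (add_mem (mul_mem invTime_mem_coefAlg hc₁) (mul_mem hypWeight_mem_coefAlg hc₂)) i
  exact ⟨c', hc', 0, zero_mem _, fun p hp =>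
    ((isDerivationOn_pd i).congr h hp).trans (by simp [h' hp])⟩

lemma boost (hc : IsWeightedCoef c) (a : Fin 2) : IsWeightedCoef (boost a c) := by
  obtain ⟨c₁, hc₁, c₂, hc₂, h⟩ := hc
  obtain ⟨e₁, he₁, h₁⟩ := exists_boost_eq hc₁ a
  obtain ⟨e₂, he₂, h₂⟩ := exists_boost_eq hc₂ a
  have hD := isDerivationOn_boost a
  have hs := coefAlg_le_smoothPosTime
  refine ⟨fun p => -(slope a p * c₁ p) + e₁ p,
    add_mem (neg_mem (mul_mem (slope_mem_coefAlg a) hc₁)) he₁,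
    fun p => -(2 * slope a p * c₂ p) + e₂ p,
    add_mem (neg_mem (mul_mem (mul_mem (const_mem_coefAlg 2) (slope_mem_coefAlg a)) hc₂)) he₂,
    fun p hp => ?_⟩
  beta_reduce
  rw [hD.congr h hp, hD.add (f := fun p => invTime p * c₁ p) (g := fun p => hypWeight p * c₂ p)
    (hs (mul_mem invTime_mem_coefAlg hc₁)) (hs (mul_mem hypWeight_mem_coefAlg hc₂)) hp,
    hD.mul (hs invTime_mem_coefAlg) (hs hc₁) hp, hD.mul (hs hypWeight_mem_coefAlg) (hs hc₂) hp,
    boost_invTime a hp, boost_hypWeight a hp, h₁ hp, h₂ hp]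
  ring

lemma pdSeq_boostSeq (hc : IsWeightedCoef c) (I : List (Fin 3)) (J : List (Fin 2)) :
    IsWeightedCoef (pdSeq I (boostSeq J c)) := by
  induction I with
  | nil =>
    induction J with
    | nil => exact hc
    | cons a J ih => exact ih.boost a
  | cons i I ih => exact ih.pd i

lemma isBigO (hc : IsWeightedCoef c) : c =O[𝓟 coneK] hypWeight := by
  obtain ⟨c₁, hc₁, c₂, hc₂, h⟩ := hc
  have hinv : invTime =O[𝓟 coneK] hypWeight := IsBigO.of_bound 1 (eventually_principal.2
    fun p hp => by
      have h0 : 0 < invTime p := inv_pos.2 (by linarith [one_lt_of_mem_coneK hp])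
      have h1 := invTime_le_hypWeight hp
      rw [Real.norm_eq_abs, Real.norm_eq_abs, abs_of_pos h0, abs_of_pos (h0.trans_le h1), one_mul]
      exact h1)
  have h₁ : (fun p => invTime p * c₁ p) =O[𝓟 coneK] hypWeight := by
    simpa using hinv.mul (isBigO_one_of_mem_coefAlg hc₁)
  have h₂ : (fun p => hypWeight p * c₂ p) =O[𝓟 coneK] hypWeight := by
    simpa using (isBigO_refl hypWeight _).mul (isBigO_one_of_mem_coefAlg hc₂)
  exact (h₁.add h₂).congr' (eventually_principal.2 fun p hp => (h (coneK_subset_posTime hp)).symm)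
    EventuallyEq.rfl

end IsWeightedCoef

/-! ## Null forms in the semi-hyperboloidal frame -/

def derivPairing (A : Matrix (Fin 3) (Fin 3) ℝ) (f g : Pt → ℝ) (p : Pt) : ℝ :=
  ∑ μ, ∑ ν, A μ ν * pd μ f p * pd ν g p

def IsNullForm (A : Matrix (Fin 3) (Fin 3) ℝ) : Prop :=
  ∀ ξ : Fin 3 → ℝ, -(ξ 0) ^ 2 + (ξ 1) ^ 2 + (ξ 2) ^ 2 = 0 → ∑ μ, ∑ ν, A μ ν * ξ μ * ξ ν = 0

lemma IsNullForm.sum_eq_mul_minkowski {A : Matrix (Fin 3) (Fin 3) ℝ} (hA : IsNullForm A)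
    (ξ : Fin 3 → ℝ) :
    ∑ μ, ∑ ν, A μ ν * ξ μ * ξ ν = -A 0 0 * (-(ξ 0) ^ 2 + (ξ 1) ^ 2 + (ξ 2) ^ 2) := by
  -- These null vectors force the symmetric part of `A` to be `-A 0 0 • diag(-1, 1, 1)`.
  have h₁ := hA ![1, 1, 0] (by simp)
  have h₂ := hA ![1, -1, 0] (by simp)
  have h₃ := hA ![1, 0, 1] (by simp)
  have h₄ := hA ![1, 0, -1] (by simp)
  have h₅ := hA ![5, 3, 4] (by norm_num [Matrix.cons_val_two])
  simp only [Fin.sum_univ_three, Matrix.cons_val_zero, Matrix.cons_val_one, Matrix.cons_val_two,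
    Matrix.tail_cons, Matrix.head_cons, mul_one, mul_zero, add_zero, mul_neg, neg_neg, neg_zero]
    at h₁ h₂ h₃ h₄ h₅
  simp only [Fin.sum_univ_three]
  linear_combination ξ 0 * ξ 1 * (h₁ - h₂) / 2 + ξ 0 * ξ 2 * (h₃ - h₄) / 2
    + ξ 1 ^ 2 * (h₁ + h₂) / 2 + ξ 2 ^ 2 * (h₃ + h₄) / 2
    + ξ 1 * ξ 2 * (h₅ - 15 * (h₁ - h₂) / 2 - 20 * (h₃ - h₄) / 2 - 9 * (h₁ + h₂) / 2
      - 16 * (h₃ + h₄) / 2) / 12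

def frameCoef (μ β : Fin 3) : Pt → ℝ :=
  fun p => if μ = β then 1 else if β = 0 then -(p μ / p 0) else 0

lemma pd_eq_sum_frameCoef_mul_ubar (μ : Fin 3) (f : Pt → ℝ) (p : Pt) :
    pd μ f p = ∑ β, frameCoef μ β p * ubar β f p := by
  fin_cases μ <;> simp [Fin.sum_univ_three, frameCoef, ubar]

lemma frameCoef_mem_coefAlg (μ β : Fin 3) : frameCoef μ β ∈ coefAlg := by
  by_cases hμβ : μ = β
  · rw [show frameCoef μ β = fun _ => 1 from funext fun p => if_pos hμβ]
    exact const_mem_coefAlg 1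
  by_cases hβ : β = 0
  · obtain ⟨a, rfl⟩ := Fin.exists_succ_eq.2 (hβ ▸ hμβ : μ ≠ 0)
    rw [show frameCoef a.succ β = -slope a from funext fun p => by simp [frameCoef, hβ, slope]]
    exact neg_mem (slope_mem_coefAlg a)
  · rw [show frameCoef μ β = fun _ => 0 from funext fun p => by simp [frameCoef, hμβ, hβ]]
    exact const_mem_coefAlg 0

def frameForm (A : Matrix (Fin 3) (Fin 3) ℝ) (β γ : Fin 3) : Pt → ℝ :=
  fun p => ∑ μ, ∑ ν, A μ ν * frameCoef μ β p * frameCoef ν γ p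

lemma frameForm_mem_coefAlg (A : Matrix (Fin 3) (Fin 3) ℝ) (β γ : Fin 3) :
    frameForm A β γ ∈ coefAlg := by
  rw [show frameForm A β γ = ∑ μ, ∑ ν, (fun _ => A μ ν) * frameCoef μ β * frameCoef ν γ from
    funext fun p => by simp [frameForm, Finset.sum_apply]]
  exact sum_mem fun μ _ => sum_mem fun ν _ =>
    mul_mem (mul_mem (const_mem_coefAlg _) (frameCoef_mem_coefAlg μ β)) (frameCoef_mem_coefAlg ν γ)

lemma derivPairing_eq_sum_frameForm (A : Matrix (Fin 3) (Fin 3) ℝ) (f g : Pt → ℝ) (p : Pt) :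
    derivPairing A f g p = ∑ β, ∑ γ, frameForm A β γ p * ubar β f p * ubar γ g p := by
  simp only [derivPairing, frameForm, pd_eq_sum_frameCoef_mul_ubar _ f,
    pd_eq_sum_frameCoef_mul_ubar _ g, Fin.sum_univ_three]
  ring

lemma IsNullForm.frameForm_zero_zero {A : Matrix (Fin 3) (Fin 3) ℝ} (hA : IsNullForm A) :
    frameForm A 0 0 = fun p => A 0 0 * hypWeight p := by
  funext p
  rw [frameForm, hA.sum_eq_mul_minkowski]
  simp only [frameCoef, ↓reduceIte, Fin.reduceEq, hypWeight, slope, Fin.succ_zero_eq_one,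
    Fin.succ_one_eq_two]
  ring

lemma ubar_zero (f : Pt → ℝ) : ubar 0 f = pd 0 f := funext fun _ => if_pos rfl

lemma ubar_succ (a : Fin 2) (f : Pt → ℝ) : ubar a.succ f = ubd a f :=
  funext fun _ => by simp [ubar, ubd, Fin.succ_ne_zero]

lemma ubar_mem_smoothPosTime {φ : Pt → ℝ} (hφ : ContDiff ℝ ∞ φ) (β : Fin 3) :
    ubar β φ ∈ smoothPosTime := by
  have hpd : ∀ i, pd i φ ∈ smoothPosTime := fun i => (isDerivationOn_pd i).smooth hφ.contDiffOn
  cases β using Fin.cases with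
  | zero => rw [ubar_zero]; exact hpd 0
  | succ a =>
    rw [ubar_succ]
    exact add_mem (mul_mem (coefAlg_le_smoothPosTime (slope_mem_coefAlg a)) (hpd 0)) (hpd a.succ)

lemma pdSeq_boostSeq_derivPairing (A : Matrix (Fin 3) (Fin 3) ℝ) (I : List (Fin 3))
    (J : List (Fin 2)) {φ ψ : Pt → ℝ} (hφ : ContDiff ℝ ∞ φ) (hψ : ContDiff ℝ ∞ ψ) ⦃p : Pt⦄
    (hp : p ∈ posTime) :
    pdSeq I (boostSeq J (derivPairing A φ ψ)) p
      = ∑ β, ∑ γ, pdSeq I (boostSeq J fun q => frameForm A β γ q * ubar β φ q * ubar γ ψ q) p := by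
  have hsm : ∀ β γ, (fun q => frameForm A β γ q * ubar β φ q * ubar γ ψ q) ∈ smoothPosTime :=
    fun β γ => mul_mem (mul_mem (coefAlg_le_smoothPosTime (frameForm_mem_coefAlg A β γ))
      (ubar_mem_smoothPosTime hφ β)) (ubar_mem_smoothPosTime hψ γ)
  simp only [funext (derivPairing_eq_sum_frameForm A φ ψ)]
  rw [pdSeq_boostSeq_finset_sum I J _
    (F := fun β q => ∑ γ, frameForm A β γ q * ubar β φ q * ubar γ ψ q)
    (fun β _ => ContDiffOn.sum fun γ _ => hsm β γ) hp]
  exact Finset.sum_congr rfl fun β _ => pdSeq_boostSeq_finset_sum I J _ (fun γ _ => hsm β γ) hp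

def nullMajorant (n m : ℕ) (φ ψ : Pt → ℝ) (p : Pt) : ℝ :=
  hypWeight p * nullSum1 n m φ ψ p + nullSum2 n m φ ψ p

lemma hypWeight_mul_nullSum1_le_nullMajorant (n m : ℕ) (φ ψ : Pt → ℝ) (p : Pt) :
    hypWeight p * nullSum1 n m φ ψ p ≤ nullMajorant n m φ ψ p :=
  le_add_of_nonneg_right (nullSum2_nonneg n m φ ψ p)

lemma nullSum2_le_nullMajorant (n m : ℕ) (φ ψ : Pt → ℝ) {p : Pt} (hp : p ∈ coneK) :
    nullSum2 n m φ ψ p ≤ nullMajorant n m φ ψ p :=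
  le_add_of_nonneg_left (mul_nonneg (hypWeight_nonneg hp) (pairSum_nonneg ..))

-- An estimate `=O[𝓟 coneData]` has a constant uniform in `φ`, `ψ` and the point `p`.
def coneData : Set ((Pt → ℝ) × (Pt → ℝ) × Pt) :=
  {x | ContDiff ℝ ∞ x.1 ∧ ContDiff ℝ ∞ x.2.1 ∧ x.2.2 ∈ coneK}

lemma isBigO_of_nonneg_of_le {X : Type*} {S : Set X} {f g : X → ℝ}
    (h : ∀ x ∈ S, 0 ≤ f x ∧ f x ≤ g x) : f =O[𝓟 S] g :=
  IsBigO.of_bound 1 (eventually_principal.2 fun x hx => by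
    rw [Real.norm_eq_abs, Real.norm_eq_abs, abs_of_nonneg (h x hx).1,
      abs_of_nonneg ((h x hx).1.trans (h x hx).2), one_mul]
    exact (h x hx).2)

lemma isBigO_pdSeq_boostSeq_frameForm_mul_mul {A : Matrix (Fin 3) (Fin 3) ℝ}
    (hA : IsNullForm A) (β γ : Fin 3) (I : List (Fin 3)) (J : List (Fin 2)) :
    (fun x : (Pt → ℝ) × (Pt → ℝ) × Pt =>
      pdSeq I (boostSeq J fun q => frameForm A β γ q * ubar β x.1 q * ubar γ x.2.1 q) x.2.2)
      =O[𝓟 coneData] fun x => nullMajorant I.length J.length x.1 x.2.1 x.2.2 := by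
  have hP : ∀ x ∈ coneData, x.2.2 ∈ coneK := fun x hx => hx.2.2
  have hφ : ∀ β, ∀ x ∈ coneData, ubar β x.1 ∈ smoothPosTime :=
    fun β x hx => ubar_mem_smoothPosTime hx.1 β
  have hψ : ∀ γ, ∀ x ∈ coneData, ubar γ x.2.1 ∈ smoothPosTime :=
    fun γ x hx => ubar_mem_smoothPosTime hx.2.1 γ
  have hc := coefAlg_le_smoothPosTime (frameForm_mem_coefAlg A β γ)
  have hc' := isBigO_pdSeq_boostSeq_of_mem_coefAlg (frameForm_mem_coefAlg A β γ)
  cases β using Fin.cases with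
  | succ a =>
    refine (isBigO_pdSeq_boostSeq_mul_mul hP (hφ _) (hψ γ) hc hc' I J).trans
      (isBigO_of_nonneg_of_le fun x hx => ?_)
    rw [ubar_succ, one_mul]
    exact ⟨pairSum_nonneg .., (pairSum_ubd_ubar_le_nullSum2 _ _ _ _ _ a γ).trans
      (nullSum2_le_nullMajorant _ _ _ _ hx.2.2)⟩
  | zero =>
    cases γ using Fin.cases with
    | succ a =>
      refine (isBigO_pdSeq_boostSeq_mul_mul hP (hφ 0) (hψ _) hc hc' I J).trans
        (isBigO_of_nonneg_of_le fun x hx => ?_)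
      rw [ubar_succ, one_mul]
      exact ⟨pairSum_nonneg .., (pairSum_ubar_ubd_le_nullSum2 _ _ _ _ _ a 0).trans
        (nullSum2_le_nullMajorant _ _ _ _ hx.2.2)⟩
    | zero =>
      have hw : IsWeightedCoef (frameForm A 0 0) := ⟨0, zero_mem _, fun _ => A 0 0,
        const_mem_coefAlg _, fun p _ => by simp [hA.frameForm_zero_zero, mul_comm]⟩
      refine (isBigO_pdSeq_boostSeq_mul_mul hP (hφ 0) (hψ 0) hc
        (fun I J => (hw.pdSeq_boostSeq I J).isBigO) I J).trans
        (isBigO_of_nonneg_of_le fun x hx => ?_)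
      rw [ubar_zero, ubar_zero, ← nullSum1_eq_pairSum]
      exact ⟨mul_nonneg (hypWeight_nonneg hx.2.2) (pairSum_nonneg ..),
        hypWeight_mul_nullSum1_le_nullMajorant ..⟩

theorem isBigO_pdSeq_boostSeq_derivPairing {A : Matrix (Fin 3) (Fin 3) ℝ} (hA : IsNullForm A)
    (I : List (Fin 3)) (J : List (Fin 2)) :
    (fun x : (Pt → ℝ) × (Pt → ℝ) × Pt => pdSeq I (boostSeq J (derivPairing A x.1 x.2.1)) x.2.2)
      =O[𝓟 coneData] fun x => nullMajorant I.length J.length x.1 x.2.1 x.2.2 :=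
  (IsBigO.fun_sum fun β _ => IsBigO.fun_sum fun γ _ =>
    isBigO_pdSeq_boostSeq_frameForm_mul_mul hA β γ I J).congr'
    (eventually_principal.2 fun _ hx => (pdSeq_boostSeq_derivPairing A I J hx.1 hx.2.1
      (coneK_subset_posTime hx.2.2)).symm) EventuallyEq.rfl

lemma isNullForm_minkowski : IsNullForm (Matrix.diagonal ![-1, 1, 1]) := fun ξ hξ => by
  simpa [Fin.sum_univ_three, Matrix.diagonal, ← sq] using hξ

lemma derivPairing_minkowski (f g : Pt → ℝ) :
    derivPairing (Matrix.diagonal ![-1, 1, 1]) f g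
      = fun p => -(pd 0 f p * pd 0 g p) + pd 1 f p * pd 1 g p + pd 2 f p * pd 2 g p := by
  funext p
  simp [derivPairing, Fin.sum_univ_three, Matrix.diagonal]

lemma isNullForm_of_transpose_eq_neg {A : Matrix (Fin 3) (Fin 3) ℝ} (hA : A.transpose = -A) :
    IsNullForm A := fun ξ _ => by
  have hA' : ∀ μ ν, A ν μ = -A μ ν := fun μ ν => congrFun (congrFun hA μ) ν
  have h : ∑ μ, ∑ ν, A μ ν * ξ μ * ξ ν = -∑ μ, ∑ ν, A μ ν * ξ μ * ξ ν :=
    calc ∑ μ, ∑ ν, A μ ν * ξ μ * ξ ν = ∑ μ, ∑ ν, A ν μ * ξ ν * ξ μ := Finset.sum_comm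
      _ = ∑ μ, ∑ ν, -(A μ ν * ξ μ * ξ ν) :=
        Finset.sum_congr rfl fun μ _ => Finset.sum_congr rfl fun ν _ => by rw [hA' μ ν]; ring
      _ = -∑ μ, ∑ ν, A μ ν * ξ μ * ξ ν := by simp only [Finset.sum_neg_distrib]
  linarith

lemma derivPairing_single_sub_single (μ ν : Fin 3) (f g : Pt → ℝ) :
    derivPairing (Matrix.single μ ν 1 - Matrix.single ν μ 1) f g
      = fun p => pd μ f p * pd ν g p - pd ν f p * pd μ g p := by
  funext p
  simp [derivPairing, Matrix.single_apply, sub_mul, Finset.sum_sub_distrib, ite_and]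

lemma hypWeight_eq {p : Pt} (hp : p ∈ coneK) :
    hypWeight p = (Real.sqrt ((p 0) ^ 2 - (rad p) ^ 2) / p 0) ^ 2 := by
  have ht := one_lt_of_mem_coneK hp
  have hr : rad p < p 0 - 1 := hp
  have hr0 : 0 ≤ rad p := Real.sqrt_nonneg _
  rw [div_pow, Real.sq_sqrt (by nlinarith), rad, Real.sq_sqrt (by positivity)]
  simp only [hypWeight, slope, Fin.succ_zero_eq_one, Fin.succ_one_eq_two]
  field_simp
  ring

end NullForm

open NullForm

/-- **Null form estimate in the semi-hyperboloidal frame** (Lemma 4.5). Here `Q` is either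
`Q₀(f,g) = η^{αβ}∂_αf∂_βg` or one of `Q_{μν}(f,g) = ∂_μf∂_νg − ∂_νf∂_μg`, and
`s = √(t² − r²)`. -/
theorem null_form_estimate
    (Q : (Pt → ℝ) → (Pt → ℝ) → Pt → ℝ)
    (hQ : (Q = fun f g p => -(pd 0 f p * pd 0 g p) + pd 1 f p * pd 1 g p + pd 2 f p * pd 2 g p)
        ∨ (∃ μ ν : Fin 3, Q = fun f g p => pd μ f p * pd ν g p - pd ν f p * pd μ g p))
    (I : List (Fin 3)) (J : List (Fin 2)) :
    ∃ C : ℝ, 0 < C ∧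
      ∀ φ ψ : Pt → ℝ, ContDiff ℝ (⊤ : ℕ∞) φ → ContDiff ℝ (⊤ : ℕ∞) ψ →
        (∀ p, p ∉ coneK → φ p = 0) → (∀ p, p ∉ coneK → ψ p = 0) →
        ∀ p ∈ coneK,
          |pdSeq I (boostSeq J (Q φ ψ)) p|
            ≤ C * (Real.sqrt ((p 0)^2 - (rad p)^2) / p 0)^2 * nullSum1 I.length J.length φ ψ p
              + C * nullSum2 I.length J.length φ ψ p := by
  obtain ⟨A, hA, rfl⟩ : ∃ A, IsNullForm A ∧ Q = derivPairing A := by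
    rcases hQ with rfl | ⟨μ, ν, rfl⟩
    · exact ⟨_, isNullForm_minkowski, funext₂ fun f g => (derivPairing_minkowski f g).symm⟩
    · exact ⟨_, isNullForm_of_transpose_eq_neg (A := Matrix.single μ ν 1 - Matrix.single ν μ 1)
        (by simp [Matrix.transpose_sub]),
        funext₂ fun f g => (derivPairing_single_sub_single μ ν f g).symm⟩
  obtain ⟨C, hC, hbound⟩ := (isBigO_pdSeq_boostSeq_derivPairing hA I J).exists_pos
  refine ⟨C, hC, fun φ ψ hφ hψ _ _ p hp => ?_⟩
  have h := isBigOWith_principal.1 hbound (φ, ψ, p) ⟨hφ, hψ, hp⟩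
  have hB : 0 ≤ nullMajorant I.length J.length φ ψ p :=
    (nullSum2_nonneg ..).trans (nullSum2_le_nullMajorant _ _ _ _ hp)
  simp only [Real.norm_eq_abs] at h
  rw [abs_of_nonneg hB, nullMajorant, hypWeight_eq hp] at h
  linarith
end
end
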